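/- arXiv:math/0511182 — 3 statements merged into one kernel-verified Lean document; each statement's English description precedes it below -/
import Mathlib

section
/- For every real number k there is a constant C_k such that for all real X ≥ 2 and all complex s with Re s ≥ 1/2, one has | P_X(s)^k · P_X^*(s)^{-k} − 1 | ≤ C_k / log X. -/
open Complex MeasureTheory

namespace GHK

/-- The finset of primes `p ≤ X`. -/
noncomputable def primesUpTo (X : ℝ) : Finset ℕ :=
  (Finset.range (⌊X⌋₊ + 1)).filter Nat.Prime

/-- `P_X(s) = exp(∑_{2 ≤ n ≤ X} Λ(n)/(n^s log n))`. -/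
noncomputable def P (X : ℝ) (s : ℂ) : ℂ :=
  Complex.exp (∑ n ∈ Finset.Icc 2 ⌊X⌋₊,
    ((ArithmeticFunction.vonMangoldt n : ℝ) : ℂ) / ((n : ℂ) ^ s * (Real.log n : ℂ)))

/-- `u(x) = (X/x) f(X log(x/e) + 1)`. -/
noncomputable def uf (f : ℝ → ℝ) (X x : ℝ) : ℝ :=
  (X / x) * f (X * Real.log (x / Real.exp 1) + 1)

/-- `v(t) = ∫_t^∞ u(x) dx`. -/
noncomputable def vf (f : ℝ → ℝ) (X t : ℝ) : ℝ :=
  ∫ x in Set.Ioi t, uf f X x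

/-- The exponential integral `E1(z) = -γ - Log z - ∑_{m ≥ 1} (-z)^m/(m!·m)`. -/
noncomputable def E1c (z : ℂ) : ℂ :=
  -(Real.eulerMascheroniConstant : ℂ) - Complex.log z -
    ∑' m : ℕ, (-z) ^ (m + 1) / ((Nat.factorial (m + 1) : ℂ) * ((m : ℂ) + 1))

/-- `U(z) = ∫_0^∞ u(x) E1(z log x) dx`. -/
noncomputable def Ufun (f : ℝ → ℝ) (X : ℝ) (z : ℂ) : ℂ :=
  ∫ x in Set.Ioi (0 : ℝ), ((uf f X x : ℝ) : ℂ) * E1c (z * (Real.log x : ℂ))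

/-- The nontrivial zeros of the Riemann zeta function. -/
def nontrivialZeros : Set ℂ := {ρ | riemannZeta ρ = 0 ∧ 0 < ρ.re ∧ ρ.re < 1}

open Classical in
/-- The multiplicity of a zero of `ζ` (`0` at points where `ζ` is not analytic). -/
noncomputable def zetaOrder (ρ : ℂ) : ℕ :=
  if h : AnalyticAt ℂ riemannZeta ρ then (analyticOrderAt riemannZeta ρ).toNat else 0

/-- The summand of the zero sum defining `Z_X(s)`, with multiplicity. -/
noncomputable def Zterm (f : ℝ → ℝ) (X : ℝ) (s : ℂ) (ρ : nontrivialZeros) : ℂ :=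
  (zetaOrder (ρ : ℂ) : ℂ) * Ufun f X ((s - (ρ : ℂ)) * (Real.log X : ℂ))

/-- `Z_X(s) = exp(-∑_ρ U((s-ρ) log X))`. -/
noncomputable def Z (f : ℝ → ℝ) (X : ℝ) (s : ℂ) : ℂ :=
  Complex.exp (-∑' ρ : nontrivialZeros, Zterm f X s ρ)

/-- The hypotheses on the fixed profile function `f`: a nonnegative `C^∞` function
supported in `[0,1]` with total mass `1`. -/
def IsProfile (f : ℝ → ℝ) : Prop :=
  ContDiff ℝ (⊤ : ℕ∞) f ∧ (∀ x, 0 ≤ f x) ∧ Function.support f ⊆ Set.Icc 0 1 ∧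
    ∫ x in (0 : ℝ)..1, f x = 1

/-- `P_X(s)^k = exp(k ∑_{2 ≤ n ≤ X} Λ(n)/(n^s log n))`. -/
noncomputable def PpowK (X k : ℝ) (s : ℂ) : ℂ :=
  Complex.exp ((k : ℂ) * ∑ n ∈ Finset.Icc 2 ⌊X⌋₊,
    ((ArithmeticFunction.vonMangoldt n : ℝ) : ℂ) / ((n : ℂ) ^ s * (Real.log n : ℂ)))

/-- `P_X^*(s)^k`, defined via principal logarithms as
`exp(-k ∑_{p ≤ X} Log(1 - p^{-s}) - k ∑_{√X < p ≤ X} Log(1 + p^{-2s}/2))`. -/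
noncomputable def PstarK (X k : ℝ) (s : ℂ) : ℂ :=
  Complex.exp (-(k : ℂ) * (∑ p ∈ primesUpTo X, Complex.log (1 - (p : ℂ) ^ (-s)))
    - (k : ℂ) * ∑ p ∈ (primesUpTo X).filter (fun p : ℕ => Real.sqrt X < (p : ℝ)),
        Complex.log (1 + (1 / 2) * (p : ℂ) ^ (-(2 * s))))

lemma cpow_nat_aux (r : ℝ) (hr : 0 < r) (t : ℂ) (m : ℕ) :
    ((r ^ m : ℝ) : ℂ) ^ t = ((r : ℂ) ^ t) ^ m := by
  have h1 : ((r ^ m : ℝ) : ℂ) ≠ 0 := Complex.ofReal_ne_zero.mpr (by positivity)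
  have h2 : (r : ℂ) ≠ 0 := Complex.ofReal_ne_zero.mpr hr.ne'
  rw [Complex.cpow_def_of_ne_zero h1, Complex.cpow_def_of_ne_zero h2, ← Complex.exp_nat_mul]
  congr 1
  rw [← Complex.ofReal_log hr.le, ← Complex.ofReal_log (by positivity : (0:ℝ) ≤ r ^ m),
    Real.log_pow]
  push_cast
  ring

lemma log_tail (w : ℂ) (hw : ‖w‖ < 1) (M : ℕ) :
    ‖Complex.log (1 - w) + ∑ m ∈ Finset.Icc 1 M, w ^ m / m‖ ≤ ‖w‖ ^ (M + 1) / (1 - ‖w‖) := by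
  have hs := Complex.hasSum_taylorSeries_neg_log hw
  have hsummable := hs.summable
  have key := Summable.sum_add_tsum_nat_add (f := fun n : ℕ => w ^ n / n) (M + 1) hsummable
  rw [hs.tsum_eq] at key
  have hrange : ∑ i ∈ Finset.range (M + 1), w ^ i / i = ∑ m ∈ Finset.Icc 1 M, w ^ m / m := by
    rw [Finset.range_eq_Ico, ← Finset.Ico_add_one_right_eq_Icc]
    rw [Finset.sum_eq_sum_Ico_succ_bot (Nat.succ_pos M)]
    simp
  rw [hrange] at key
  beta_reduce at key
  have heq : Complex.log (1 - w) + ∑ m ∈ Finset.Icc 1 M, w ^ m / m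
      = -∑' i : ℕ, w ^ (i + (M + 1)) / ((i + (M + 1) : ℕ) : ℂ) := by
    rw [eq_neg_iff_add_eq_zero, add_assoc, key]
    simp
  rw [heq, norm_neg]
  have hb : ∀ i : ℕ, ‖w ^ (i + (M + 1)) / (((i + (M + 1) : ℕ)) : ℂ)‖ ≤ ‖w‖ ^ (M + 1) * ‖w‖ ^ i := by
    intro i
    rw [norm_div, norm_pow]
    have h1 : (1 : ℝ) ≤ ‖(((i + (M + 1) : ℕ)) : ℂ)‖ := by
      rw [Complex.norm_natCast]
      exact_mod_cast Nat.one_le_iff_ne_zero.mpr (by omega)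
    calc ‖w‖ ^ (i + (M + 1)) / ‖(((i + (M + 1) : ℕ)) : ℂ)‖ ≤ ‖w‖ ^ (i + (M + 1)) / 1 := by
          apply div_le_div_of_nonneg_left ?_ ?_ h1 <;> [positivity; norm_num]
      _ = ‖w‖ ^ (M + 1) * ‖w‖ ^ i := by rw [div_one, ← pow_add]; ring_nf
  have hgeom : Summable (fun i : ℕ => ‖w‖ ^ (M + 1) * ‖w‖ ^ i) :=
    (summable_geometric_of_lt_one (norm_nonneg w) hw).mul_left _
  have hnorm : Summable (fun i : ℕ => ‖w ^ (i + (M + 1)) / (((i + (M + 1) : ℕ)) : ℂ)‖) :=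
    Summable.of_nonneg_of_le (fun i => norm_nonneg _) hb hgeom
  calc ‖∑' i : ℕ, w ^ (i + (M + 1)) / (((i + (M + 1) : ℕ)) : ℂ)‖
      ≤ ∑' i : ℕ, ‖w ^ (i + (M + 1)) / (((i + (M + 1) : ℕ)) : ℂ)‖ := norm_tsum_le_tsum_norm hnorm
    _ ≤ ∑' i : ℕ, ‖w‖ ^ (M + 1) * ‖w‖ ^ i := Summable.tsum_le_tsum hb hnorm hgeom
    _ = ‖w‖ ^ (M + 1) / (1 - ‖w‖) := by
        rw [tsum_mul_left, tsum_geometric_of_lt_one (norm_nonneg w) hw, div_eq_mul_inv]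

lemma alg_tele (x y : ℝ) (hy1 : 1 ≤ y) (hyx : y ≤ x) (h8 : x ^ 8 - y ^ 8 = 1) :
    1 / x ^ 9 ≤ 8 * (1 / y - 1 / x) := by
  have hy0 : (0:ℝ) < y := lt_of_lt_of_le one_pos hy1
  have hx0 : (0:ℝ) < x := lt_of_lt_of_le hy0 hyx
  have hsum : x^7 + x^6*y + x^5*y^2 + x^4*y^3 + x^3*y^4 + x^2*y^5 + x*y^6 + y^7 ≤ 8 * x^7 := by
    have l1 : x^6*y ≤ x^7 := by nlinarith [pow_nonneg hx0.le 6]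
    have l2 : x^5*y^2 ≤ x^7 := by nlinarith [pow_le_pow_left₀ hy0.le hyx 2, pow_nonneg hx0.le 5]
    have l3 : x^4*y^3 ≤ x^7 := by nlinarith [pow_le_pow_left₀ hy0.le hyx 3, pow_nonneg hx0.le 4]
    have l4 : x^3*y^4 ≤ x^7 := by nlinarith [pow_le_pow_left₀ hy0.le hyx 4, pow_nonneg hx0.le 3]
    have l5 : x^2*y^5 ≤ x^7 := by nlinarith [pow_le_pow_left₀ hy0.le hyx 5, pow_nonneg hx0.le 2]
    have l6 : x*y^6 ≤ x^7 := by nlinarith [pow_le_pow_left₀ hy0.le hyx 6]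
    have l7 : y^7 ≤ x^7 := pow_le_pow_left₀ hy0.le hyx 7
    linarith
  have hfac : x^8 - y^8 = (x - y) * (x^7 + x^6*y + x^5*y^2 + x^4*y^3 + x^3*y^4 + x^2*y^5 + x*y^6 + y^7) := by
    ring
  have hxy0 : 0 ≤ x - y := sub_nonneg.mpr hyx
  have hx_y : 1 ≤ (x - y) * (8 * x^7) := by
    nlinarith [mul_le_mul_of_nonneg_left hsum hxy0]
  have hrw : 1 / y - 1 / x = (x - y) / (x * y) := by
    rw [div_sub_div _ _ hy0.ne' hx0.ne', one_mul, mul_one, mul_comm]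
  rw [hrw]
  have hxy_le : x * y ≤ x^2 := by nlinarith
  have h2 : (x - y)/(x^2) ≤ (x - y)/(x*y) := by
    apply div_le_div_of_nonneg_left hxy0 (by positivity) hxy_le
  have h3 : 1/(8*x^9) ≤ (x - y)/x^2 := by
    rw [div_le_div_iff₀ (by positivity) (by positivity)]
    nlinarith [mul_le_mul_of_nonneg_right hx_y (sq_nonneg x)]
  have h4 : 1/(8*x^9) = (1/8) * (1/x^9) := by ring
  linarith

lemma nat_tele (i : ℕ) (hi : 1 ≤ i) :
    ((i + 1 : ℕ) : ℝ) ^ (-(9/8) : ℝ) ≤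
      8 * (((i : ℕ) : ℝ) ^ (-(1/8) : ℝ) - ((i + 1 : ℕ) : ℝ) ^ (-(1/8) : ℝ)) := by
  have ha1 : (1:ℝ) ≤ (i:ℝ) := by exact_mod_cast hi
  set a : ℝ := (i:ℝ) with hadef
  set b : ℝ := ((i+1 : ℕ):ℝ) with hbdef
  have hab : b = a + 1 := by rw [hbdef, hadef]; push_cast; ring
  have ha0 : (0:ℝ) < a := lt_of_lt_of_le one_pos ha1
  have hb0 : (0:ℝ) < b := by rw [hab]; linarith
  set y : ℝ := a ^ ((1/8 : ℝ)) with hy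
  set x : ℝ := b ^ ((1/8 : ℝ)) with hx
  have hy0 : 0 < y := Real.rpow_pos_of_pos ha0 _
  have hx0 : 0 < x := Real.rpow_pos_of_pos hb0 _
  have hy8 : y ^ (8:ℕ) = a := by
    rw [hy, ← Real.rpow_natCast (a ^ (1/8:ℝ)) 8, ← Real.rpow_mul ha0.le]; norm_num
  have hx8 : x ^ (8:ℕ) = b := by
    rw [hx, ← Real.rpow_natCast (b ^ (1/8:ℝ)) 8, ← Real.rpow_mul hb0.le]; norm_num
  have hy1 : 1 ≤ y := Real.one_le_rpow ha1 (by norm_num)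
  have hyx : y ≤ x := Real.rpow_le_rpow ha0.le (by linarith) (by norm_num)
  have h8 : x ^ 8 - y ^ 8 = 1 := by rw [hx8, hy8, hab]; ring
  have key := alg_tele x y hy1 hyx h8
  have e1 : b ^ (-(9/8) : ℝ) = 1 / x ^ 9 := by
    rw [hx, ← Real.rpow_natCast (b ^ (1/8:ℝ)) 9, ← Real.rpow_mul hb0.le,
      Real.rpow_neg hb0.le]
    norm_num
  have e2 : a ^ (-(1/8) : ℝ) = 1 / y := by
    rw [hy, Real.rpow_neg ha0.le]
    norm_num
  have e3 : b ^ (-(1/8) : ℝ) = 1 / x := by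
    rw [hx, Real.rpow_neg hb0.le]
    norm_num
  rw [e1, e2, e3]
  exact key

lemma sum_pow_bound (N : ℕ) : ∑ n ∈ Finset.Icc 2 N, ((n:ℝ)) ^ (-(9/8):ℝ) ≤ 8 := by
  rcases lt_or_ge N 2 with hN | hN
  · rw [Finset.Icc_eq_empty (by omega)]
    norm_num
  · rw [← Finset.Ico_add_one_right_eq_Icc, Finset.sum_Ico_eq_sum_range]
    have hstep : ∀ i ∈ Finset.range (N + 1 - 2), ((2 + i : ℕ):ℝ) ^ (-(9/8):ℝ) ≤
        8 * ((((i+1) : ℕ):ℝ) ^ (-(1/8):ℝ) - (((i+1) + 1 : ℕ):ℝ) ^ (-(1/8):ℝ)) := by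
      intro i _
      have h := nat_tele (i+1) (by omega)
      have h21 : 2 + i = i + 1 + 1 := by omega
      rw [h21]
      exact h
    calc ∑ i ∈ Finset.range (N + 1 - 2), ((2 + i : ℕ):ℝ) ^ (-(9/8):ℝ)
        ≤ ∑ i ∈ Finset.range (N + 1 - 2),
          (8 * ((((i+1) : ℕ):ℝ) ^ (-(1/8):ℝ) - (((i+1) + 1 : ℕ):ℝ) ^ (-(1/8):ℝ))) :=
          Finset.sum_le_sum hstep
      _ = 8 * ∑ i ∈ Finset.range (N + 1 - 2),
          (((fun j : ℕ => (((j+1) : ℕ):ℝ) ^ (-(1/8):ℝ)) i) - ((fun j : ℕ => (((j+1) : ℕ):ℝ) ^ (-(1/8):ℝ)) (i+1))) := by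
          rw [← Finset.mul_sum]
      _ = 8 * ((((0+1 : ℕ)):ℝ) ^ (-(1/8):ℝ) - ((((N + 1 - 2)+1 : ℕ)):ℝ) ^ (-(1/8):ℝ)) := by
          rw [Finset.sum_range_sub' (fun j : ℕ => (((j+1) : ℕ):ℝ) ^ (-(1/8):ℝ))]
      _ ≤ 8 := by
          have h0 : (0:ℝ) ≤ ((((N + 1 - 2)+1 : ℕ)):ℝ) ^ (-(1/8):ℝ) := Real.rpow_nonneg (by positivity) _
          push_cast at h0 ⊢
          norm_num
          linarith
lemma S_reindex (N : ℕ) (s : ℂ) :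
    ∑ n ∈ Finset.Icc 2 N,
      ((ArithmeticFunction.vonMangoldt n : ℝ) : ℂ) / ((n : ℂ) ^ s * (Real.log n : ℂ))
    = ∑ p ∈ (Finset.range (N+1)).filter Nat.Prime,
        ∑ m ∈ Finset.Icc 1 (Nat.log p N), ((p : ℂ) ^ (-s)) ^ m / (m : ℂ) := by
  rw [← Finset.sum_filter_of_ne (p := fun n => IsPrimePow n)
    (f := fun n => ((ArithmeticFunction.vonMangoldt n : ℝ) : ℂ) / ((n : ℂ) ^ s * (Real.log n : ℂ)))]
  · rw [Finset.sum_sigma']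
    apply Finset.sum_nbij' (i := fun n => (⟨n.minFac, n.factorization n.minFac⟩ :
        (_ : ℕ) × ℕ)) (j := fun pm => pm.1 ^ pm.2)
    · -- hi : maps into sigma set
      intro n hn
      simp only [Finset.mem_filter, Finset.mem_Icc] at hn
      obtain ⟨⟨hn2, hnN⟩, hpp⟩ := hn
      have hn1 : n ≠ 1 := by omega
      have hp : n.minFac.Prime := Nat.minFac_prime hn1
      have heq : n.minFac ^ n.factorization n.minFac = n := hpp.minFac_pow_factorization_eq
      have hm1 : 0 < n.factorization n.minFac :=
        hp.factorization_pos_of_dvd (by omega) n.minFac_dvd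
      simp only [Finset.mem_sigma, Finset.mem_filter, Finset.mem_range, Finset.mem_Icc]
      refine ⟨⟨?_, hp⟩, hm1, ?_⟩
      · have := Nat.minFac_le (n := n) (by omega)
        omega
      · rw [Nat.le_log_iff_pow_le hp.one_lt (by omega)]
        omega
    · -- hj
      intro pm hpm
      simp only [Finset.mem_sigma, Finset.mem_filter, Finset.mem_range, Finset.mem_Icc] at hpm
      obtain ⟨⟨hpN, hp⟩, hm1, hmlog⟩ := hpm
      have hN0 : N ≠ 0 := by
        rcases Nat.eq_zero_or_pos N with h | h
        · subst h; simp [Nat.log_zero_right] at hmlog; omega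
        · omega
      have hle : pm.1 ^ pm.2 ≤ N := le_trans
        (Nat.pow_le_pow_right hp.one_lt.le hmlog) (Nat.pow_log_le_self pm.1 hN0)
      simp only [Finset.mem_filter, Finset.mem_Icc]
      refine ⟨⟨le_trans hp.two_le (Nat.le_self_pow (by omega) _), hle⟩, ?_⟩
      exact ⟨pm.1, pm.2, hp.prime, by omega, rfl⟩
    · -- left_inv
      intro n hn
      simp only [Finset.mem_filter] at hn
      exact hn.2.minFac_pow_factorization_eq
    · -- right_inv
      intro pm hpm
      simp only [Finset.mem_sigma, Finset.mem_filter, Finset.mem_range, Finset.mem_Icc] at hpm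
      obtain ⟨⟨hpN, hp⟩, hm1, hmlog⟩ := hpm
      have h1 : (pm.1 ^ pm.2).minFac = pm.1 := hp.pow_minFac (by omega)
      have h2 : (pm.1 ^ pm.2).factorization pm.1 = pm.2 := by
        rw [hp.factorization_pow, Finsupp.single_eq_same]
      simp only [h1, h2]
    · -- values
      intro n hn
      simp only [Finset.mem_filter, Finset.mem_Icc] at hn
      obtain ⟨⟨hn2, hnN⟩, hpp⟩ := hn
      have hn1 : n ≠ 1 := by omega
      have hp : n.minFac.Prime := Nat.minFac_prime hn1
      set p := n.minFac
      set m := n.factorization p with hm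
      have heq : p ^ m = n := hpp.minFac_pow_factorization_eq
      have hm1 : 0 < m := hp.factorization_pos_of_dvd (by omega) n.minFac_dvd
      have hΛ : ArithmeticFunction.vonMangoldt n = Real.log p := by
        rw [ArithmeticFunction.vonMangoldt_apply, if_pos hpp]
      have hlog : Real.log n = m * Real.log p := by
        rw [← heq, Nat.cast_pow, Real.log_pow]
      have hcpow : ((n : ℕ) : ℂ) ^ s = ((p : ℂ) ^ s) ^ m := by
        rw [← heq]
        push_cast
        rw [show ((p : ℂ) ^ m : ℂ) = (((p : ℝ) ^ m : ℝ) : ℂ) by push_cast; ring]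
        rw [cpow_nat_aux (p : ℝ) (by exact_mod_cast hp.pos) s m]
        norm_num
      have hps : ((p : ℂ)) ^ s ≠ 0 := by
        rw [Ne, Complex.cpow_eq_zero_iff]
        push_neg
        intro h
        exact absurd h (by exact_mod_cast hp.pos.ne')
      have hlogp : Real.log p ≠ 0 := (Real.log_pos (by exact_mod_cast hp.one_lt)).ne'
      rw [hΛ, hlog, hcpow]
      rw [Complex.cpow_neg, inv_pow]
      have hmne : (m : ℂ) ≠ 0 := by exact_mod_cast hm1.ne'
      have hclog : Complex.log (p:ℂ) ≠ 0 := by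
        rw [← Complex.ofReal_natCast, ← Complex.ofReal_log (by positivity)]
        exact_mod_cast hlogp
      have hpsm : ((p:ℂ)^s)^m ≠ 0 := pow_ne_zero _ hps
      field_simp
      push_cast
      ring
  · -- terms with Λ n = 0 vanish
    intro n _ hne
    by_contra hn
    apply hne
    have : ArithmeticFunction.vonMangoldt n = 0 := by
      rw [← ArithmeticFunction.vonMangoldt_ne_zero_iff] at hn
      push_neg at hn
      exact hn
    simp [this]
lemma cpow_nat_mul_aux (r : ℝ) (hr : 0 < r) (t : ℂ) (m : ℕ) :
    (r : ℂ) ^ ((m : ℂ) * t) = ((r : ℂ) ^ t) ^ m := by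
  have h2 : (r : ℂ) ≠ 0 := Complex.ofReal_ne_zero.mpr hr.ne'
  rw [Complex.cpow_def_of_ne_zero h2, Complex.cpow_def_of_ne_zero h2, ← Complex.exp_nat_mul]
  congr 1
  ring

set_option maxHeartbeats 1600000 in
lemma prime_term_bound (X : ℝ) (hX : 2 ≤ X) (s : ℂ) (hs : 1 / 2 ≤ s.re) (p : ℕ)
    (hp : p.Prime) (hpX : (p : ℝ) ≤ X) :
    ‖Complex.log (1 - (p : ℂ) ^ (-s))
      + ∑ m ∈ Finset.Icc 1 (Nat.log p ⌊X⌋₊), ((p : ℂ) ^ (-s)) ^ m / (m : ℂ)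
      + (if Real.sqrt X < (p : ℝ) then Complex.log (1 + (1 / 2) * (p : ℂ) ^ (-(2 * s))) else 0)‖
      ≤ 5 * X ^ (-(1/8) : ℝ) * (p : ℝ) ^ (-(9/8) : ℝ) := by
  have hX0 : (0:ℝ) < X := by linarith
  have hp0 : (0:ℝ) < (p:ℝ) := by exact_mod_cast hp.pos
  have hp1 : (1:ℝ) ≤ (p:ℝ) := by exact_mod_cast hp.one_le
  have hp2 : (2:ℝ) ≤ (p:ℝ) := by exact_mod_cast hp.two_le
  have hN0 : ⌊X⌋₊ ≠ 0 := by
    have : (2:ℕ) ≤ ⌊X⌋₊ := Nat.le_floor (by exact_mod_cast hX)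
    omega
  have hpN : p ≤ ⌊X⌋₊ := Nat.le_floor (by exact_mod_cast hpX)
  set w : ℂ := (p : ℂ) ^ (-s) with hw
  set a : ℝ := ‖w‖ with hadef
  have ha : a = (p:ℝ) ^ ((-s).re) := by
    rw [hadef, hw, Complex.norm_natCast_cpow_of_pos hp.pos]
  have ha_nonneg : 0 ≤ a := norm_nonneg w
  have ha_half : a ≤ (p:ℝ) ^ (-(1/2) : ℝ) := by
    rw [ha]
    apply Real.rpow_le_rpow_of_exponent_le hp1
    rw [Complex.neg_re]
    linarith
  have hhalf_sq : ((p:ℝ) ^ (-(1/2) : ℝ))^2 = (p:ℝ) ^ (-1 : ℝ) := by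
    rw [← Real.rpow_natCast ((p:ℝ) ^ (-(1/2):ℝ)) 2, ← Real.rpow_mul hp0.le]
    norm_num
  have hinv : (p:ℝ) ^ (-1 : ℝ) ≤ 1/2 := by
    rw [Real.rpow_neg_one]
    rw [inv_le_comm₀ hp0 (by norm_num)]
    linarith
  have hhalf_nonneg : (0:ℝ) ≤ (p:ℝ) ^ (-(1/2):ℝ) := Real.rpow_nonneg hp0.le _
  have h34 : a ≤ 3/4 := by nlinarith
  have ha1 : a < 1 := by linarith
  have hquarter : (1:ℝ)/4 ≤ 1 - a := by linarith
  -- generic tail bound: a^(M+1)/(1-a) ≤ 4*a^(M+1)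
  have htail4 : ∀ M : ℕ, a ^ (M+1) / (1 - a) ≤ 4 * a ^ (M+1) := by
    intro M
    calc a ^ (M+1) / (1 - a) ≤ a ^ (M+1) / (1/4) :=
          div_le_div_of_nonneg_left (by positivity) (by norm_num) hquarter
      _ = 4 * a ^ (M+1) := by ring
  -- a^(M+1) ≤ p^(-(M+1)/2)  as rpow
  have hpowa : ∀ M : ℕ, a ^ (M+1) ≤ (p:ℝ) ^ (-(((M:ℝ)+1))/2) := by
    intro M
    calc a ^ (M+1) ≤ ((p:ℝ) ^ (-(1/2):ℝ)) ^ (M+1) := pow_le_pow_left₀ ha_nonneg ha_half _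
      _ = (p:ℝ) ^ (-(((M:ℝ)+1))/2) := by
          rw [← Real.rpow_natCast ((p:ℝ) ^ (-(1/2):ℝ)) (M+1), ← Real.rpow_mul hp0.le]
          push_cast
          ring_nf
  by_cases hsp : Real.sqrt X < (p : ℝ)
  · -- large prime case: Nat.log = 1
    have hXp2 : X < (p:ℝ)^2 := by
      have := (Real.sqrt_lt' hp0).mp hsp
      linarith
    have hM1 : Nat.log p ⌊X⌋₊ = 1 := by
      apply Nat.log_eq_of_pow_le_of_lt_pow (by simpa using hpN)
      have h1 : ((⌊X⌋₊ : ℝ)) < ((p^2 : ℕ) : ℝ) := by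
        push_cast
        calc (⌊X⌋₊:ℝ) ≤ X := Nat.floor_le hX0.le
          _ < _ := hXp2
      exact_mod_cast h1
    rw [hM1, if_pos hsp]
    have hsum1 : ∑ m ∈ Finset.Icc (1:ℕ) 1, w ^ m / (m : ℂ) = w := by
      rw [Finset.Icc_self, Finset.sum_singleton]
      norm_num
    rw [hsum1]
    set u : ℂ := (1/2 : ℂ) * (p : ℂ) ^ (-(2 * s)) with hu
    have hu_eq : u = (1/2 : ℂ) * w ^ 2 := by
      rw [hu, hw]
      congr 1
      rw [show (-(2 * s) : ℂ) = ((2:ℕ):ℂ) * (-s) by push_cast; ring,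
        ← Complex.ofReal_natCast p, cpow_nat_mul_aux (p:ℝ) hp0 (-s) 2,
        Complex.ofReal_natCast]
    have hnu : ‖u‖ = a^2 / 2 := by
      rw [hu_eq, norm_mul, norm_pow]
      simp [hadef]
      ring
    have hnu_small : ‖u‖ ≤ 9/32 := by rw [hnu]; nlinarith
    have hnu1 : ‖-u‖ < 1 := by rw [norm_neg]; linarith
    have hsumu : ∑ m ∈ Finset.Icc (1:ℕ) 1, (-u) ^ m / (m : ℂ) = -u := by
      rw [Finset.Icc_self, Finset.sum_singleton]
      norm_num
    have hdecomp : Complex.log (1 - w) + w + Complex.log (1 + u)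
        = (Complex.log (1 - w) + ∑ m ∈ Finset.Icc (1:ℕ) 2, w ^ m / (m : ℂ))
          + (Complex.log (1 - (-u)) + ∑ m ∈ Finset.Icc (1:ℕ) 1, (-u) ^ m / (m : ℂ)) := by
      rw [hsumu, sub_neg_eq_add]
      have : ∑ m ∈ Finset.Icc (1:ℕ) 2, w ^ m / (m : ℂ) = w + w^2/2 := by
        rw [show Finset.Icc (1:ℕ) 2 = {1, 2} from rfl]
        rw [Finset.sum_insert (by decide), Finset.sum_singleton]
        norm_num
      rw [this, hu_eq]
      ring
    rw [hdecomp]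
    have hb1 := log_tail w ha1 2
    have hb2 := log_tail (-u) hnu1 1
    rw [norm_neg] at hb2
    have hub : ‖u‖ ^ 2 / (1 - ‖u‖) ≤ a ^ 3 := by
      have h1 : (1:ℝ) - ‖u‖ ≥ 1/2 := by linarith [hnu_small]
      have h2 : ‖u‖ ^ 2 ≤ a ^ 3 / 2 := by
        rw [hnu]
        have : a ≤ 1 := by linarith
        nlinarith
      calc ‖u‖ ^ 2 / (1 - ‖u‖) ≤ (a^3/2) / (1/2) := by
            apply div_le_div₀ (by positivity) h2 (by norm_num) h1
        _ = a ^ 3 := by ring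
    have hfinal : ‖(Complex.log (1 - w) + ∑ m ∈ Finset.Icc (1:ℕ) 2, w ^ m / (m : ℂ))
          + (Complex.log (1 - (-u)) + ∑ m ∈ Finset.Icc (1:ℕ) 1, (-u) ^ m / (m : ℂ))‖ ≤ 5 * a ^ 3 := by
      calc _ ≤ _ := norm_add_le _ _
        _ ≤ a ^ 3 / (1 - a) + ‖u‖ ^ 2 / (1 - ‖u‖) := by
            apply add_le_add
            · simpa using hb1
            · simpa using hb2
        _ ≤ 4 * a ^ 3 + a ^ 3 := add_le_add (htail4 2) hub
        _ = 5 * a ^ 3 := by ring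
    refine le_trans hfinal ?_
    -- 5 a^3 ≤ 5 X^{-1/8} p^{-9/8}
    have h3 : a ^ 3 ≤ (p:ℝ) ^ (-(3/2) : ℝ) := by
      have := hpowa 2
      push_cast at this
      calc a ^ 3 = a ^ (2+1) := by ring
        _ ≤ (p:ℝ) ^ (-(((2:ℝ))+1)/2) := hpowa 2
        _ = (p:ℝ) ^ (-(3/2) : ℝ) := by norm_num
    have hsplit : (p:ℝ) ^ (-(3/2) : ℝ) = (p:ℝ) ^ (-(3/8) : ℝ) * (p:ℝ) ^ (-(9/8) : ℝ) := by
      rw [← Real.rpow_add hp0]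
      norm_num
    have hcompare : (p:ℝ) ^ (-(3/8) : ℝ) ≤ X ^ (-(1/8) : ℝ) := by
      have h18 : X ^ ((1/8) : ℝ) ≤ (p:ℝ) ^ ((3/8) : ℝ) := by
        calc X ^ ((1/8) : ℝ) ≤ ((p:ℝ)^2) ^ ((1/8) : ℝ) :=
              Real.rpow_le_rpow hX0.le hXp2.le (by norm_num)
          _ = (p:ℝ) ^ ((1/4) : ℝ) := by
              rw [← Real.rpow_natCast (p:ℝ) 2, ← Real.rpow_mul hp0.le]
              norm_num
          _ ≤ (p:ℝ) ^ ((3/8) : ℝ) := Real.rpow_le_rpow_of_exponent_le hp1 (by norm_num)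
      rw [Real.rpow_neg hp0.le, Real.rpow_neg hX0.le]
      apply inv_anti₀ (Real.rpow_pos_of_pos hX0 _) h18
    have h0 : (0:ℝ) ≤ (p:ℝ) ^ (-(9/8) : ℝ) := Real.rpow_nonneg hp0.le _
    calc 5 * a ^ 3 ≤ 5 * ((p:ℝ) ^ (-(3/2) : ℝ)) := by linarith
      _ = 5 * ((p:ℝ) ^ (-(3/8) : ℝ) * (p:ℝ) ^ (-(9/8) : ℝ)) := by rw [← hsplit]
      _ ≤ 5 * (X ^ (-(1/8) : ℝ) * (p:ℝ) ^ (-(9/8) : ℝ)) := by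
          have := mul_le_mul_of_nonneg_right hcompare h0
          linarith
      _ = 5 * X ^ (-(1/8) : ℝ) * (p:ℝ) ^ (-(9/8) : ℝ) := by ring
  · -- small prime case
    rw [if_neg hsp]
    push_neg at hsp
    set M := Nat.log p ⌊X⌋₊ with hM
    have hM2 : 2 ≤ M := by
      have hp2X : (p:ℝ)^2 ≤ X := by
        have := Real.sq_sqrt hX0.le
        nlinarith [hsp, Real.sqrt_nonneg X]
      have hp2N : p^2 ≤ ⌊X⌋₊ := Nat.le_floor (by push_cast; exact_mod_cast hp2X)
      rw [hM, Nat.le_log_iff_pow_le hp.one_lt hN0]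
      exact hp2N
    have hXpM : X < (p:ℝ) ^ ((M:ℝ) + 1) := by
      have h1 : ⌊X⌋₊ < p ^ (M + 1) := Nat.lt_pow_succ_log_self hp.one_lt _
      have h2 : X < (⌊X⌋₊ : ℝ) + 1 := Nat.lt_floor_add_one X
      have h3 : ((⌊X⌋₊ : ℕ) : ℝ) + 1 ≤ ((p ^ (M+1) : ℕ) : ℝ) := by exact_mod_cast h1
      rw [show ((M:ℝ) + 1) = ((M + 1 : ℕ) : ℝ) by push_cast; ring, Real.rpow_natCast]
      push_cast at h3 ⊢
      linarith
    rw [add_zero]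
    have hbound := log_tail w ha1 M
    have step1 := le_trans hbound (htail4 M)
    have hsplit : (p:ℝ) ^ (-(((M:ℝ)+1))/2) =
        (p:ℝ) ^ (-(((M:ℝ)+1))/8) * (p:ℝ) ^ (-(3*((M:ℝ)+1))/8) := by
      rw [← Real.rpow_add hp0]
      congr 1
      ring
    have hc1 : (p:ℝ) ^ (-(((M:ℝ)+1))/8) ≤ X ^ (-(1/8):ℝ) := by
      have h18 : X ^ ((1/8):ℝ) ≤ (p:ℝ) ^ ((((M:ℝ)+1))/8) := by
        calc X ^ ((1/8):ℝ) ≤ ((p:ℝ) ^ ((M:ℝ)+1)) ^ ((1/8):ℝ) :=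
              Real.rpow_le_rpow hX0.le hXpM.le (by norm_num)
          _ = (p:ℝ) ^ ((((M:ℝ)+1))/8) := by
              rw [← Real.rpow_mul hp0.le]
              congr 1
              ring
      have e1 : (-(((M:ℝ)+1))/8) = -((((M:ℝ)+1))/8) := by ring
      have e2 : (-(1/8):ℝ) = -((1/8):ℝ) := by ring
      rw [e1, e2, Real.rpow_neg hp0.le, Real.rpow_neg hX0.le]
      exact inv_anti₀ (Real.rpow_pos_of_pos hX0 _) h18
    have hc2 : (p:ℝ) ^ (-(3*((M:ℝ)+1))/8) ≤ (p:ℝ) ^ (-(9/8):ℝ) := by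
      apply Real.rpow_le_rpow_of_exponent_le hp1
      have : (2:ℝ) ≤ (M:ℝ) := by exact_mod_cast hM2
      linarith
    have hXn : (0:ℝ) ≤ X ^ (-(1/8):ℝ) := Real.rpow_nonneg hX0.le _
    have hpn : (0:ℝ) ≤ (p:ℝ) ^ (-(9/8):ℝ) := Real.rpow_nonneg hp0.le _
    calc ‖Complex.log (1 - w) + ∑ m ∈ Finset.Icc 1 M, w ^ m / (m : ℂ)‖
        ≤ 4 * a ^ (M+1) := step1
      _ ≤ 4 * ((p:ℝ) ^ (-(((M:ℝ)+1))/2)) := by linarith [hpowa M]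
      _ = 4 * ((p:ℝ) ^ (-(((M:ℝ)+1))/8) * (p:ℝ) ^ (-(3*((M:ℝ)+1))/8)) := by rw [hsplit]
      _ ≤ 4 * (X ^ (-(1/8):ℝ) * (p:ℝ) ^ (-(9/8):ℝ)) := by
          have := mul_le_mul hc1 hc2 (Real.rpow_nonneg hp0.le _) hXn
          linarith
      _ ≤ 5 * X ^ (-(1/8):ℝ) * (p:ℝ) ^ (-(9/8):ℝ) := by
          have := mul_nonneg hXn hpn
          linarith

/-- Lemma 2 of Gonek–Hughes–Keating:
`P_X(s)^k = P_X^*(s)^k (1 + O_k(1/log X))` uniformly for `Re s ≥ 1/2`. -/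
theorem P_close_to_Pstar (k : ℝ) :
    ∃ Ck : ℝ, ∀ X : ℝ, 2 ≤ X → ∀ s : ℂ, 1 / 2 ≤ s.re →
      ‖PpowK X k s * PstarK X (-k) s - 1‖ ≤ Ck / Real.log X := by
  refine ⟨320 * (|k| + 1) * (Real.exp (40 * (|k| + 1)) + 1), ?_⟩
  intro X hX s hs
  have hX0 : (0:ℝ) < X := by linarith
  have hlog : 0 < Real.log X := Real.log_pos (by linarith)
  set Q : ℝ := Real.exp (40 * (|k| + 1)) + 1 with hQ
  have hQ2 : 2 ≤ Q := by
    have := Real.one_le_exp (by positivity : (0:ℝ) ≤ 40 * (|k| + 1))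
    rw [hQ]; linarith
  have hQ0 : 0 ≤ Q := by linarith
  set T : ℂ := (∑ n ∈ Finset.Icc 2 ⌊X⌋₊,
      ((ArithmeticFunction.vonMangoldt n : ℝ) : ℂ) / ((n : ℂ) ^ s * (Real.log n : ℂ)))
    + (∑ p ∈ primesUpTo X, Complex.log (1 - (p : ℂ) ^ (-s)))
    + (∑ p ∈ (primesUpTo X).filter (fun p : ℕ => Real.sqrt X < (p : ℝ)),
        Complex.log (1 + (1 / 2) * (p : ℂ) ^ (-(2 * s)))) with hT
  have hprod : PpowK X k s * PstarK X (-k) s = Complex.exp ((k:ℂ) * T) := by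
    rw [PpowK, PstarK, ← Complex.exp_add, hT]
    congr 1
    push_cast
    ring
  have hTsum : T = ∑ p ∈ primesUpTo X,
      (Complex.log (1 - (p : ℂ) ^ (-s))
        + ∑ m ∈ Finset.Icc 1 (Nat.log p ⌊X⌋₊), ((p : ℂ) ^ (-s)) ^ m / (m : ℂ)
        + (if Real.sqrt X < (p : ℝ) then Complex.log (1 + (1 / 2) * (p : ℂ) ^ (-(2 * s)))
            else 0)) := by
    rw [hT, S_reindex ⌊X⌋₊ s]
    rw [Finset.sum_add_distrib, Finset.sum_add_distrib, ← Finset.sum_filter]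
    show _ = (∑ p ∈ primesUpTo X, Complex.log (1 - (p : ℂ) ^ (-s)))
      + (∑ p ∈ primesUpTo X, ∑ m ∈ Finset.Icc 1 (Nat.log p ⌊X⌋₊), ((p : ℂ) ^ (-s)) ^ m / (m : ℂ))
      + _
    rw [primesUpTo]
    ring
  have hTbound : ‖T‖ ≤ 40 * X ^ (-(1/8) : ℝ) := by
    rw [hTsum]
    have hXn : (0:ℝ) ≤ X ^ (-(1/8):ℝ) := Real.rpow_nonneg hX0.le _
    calc ‖∑ p ∈ primesUpTo X, _‖ ≤ ∑ p ∈ primesUpTo X, ‖Complex.log (1 - (p : ℂ) ^ (-s))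
        + ∑ m ∈ Finset.Icc 1 (Nat.log p ⌊X⌋₊), ((p : ℂ) ^ (-s)) ^ m / (m : ℂ)
        + (if Real.sqrt X < (p : ℝ) then Complex.log (1 + (1 / 2) * (p : ℂ) ^ (-(2 * s)))
            else 0)‖ := norm_sum_le _ _
      _ ≤ ∑ p ∈ primesUpTo X, 5 * X ^ (-(1/8) : ℝ) * (p : ℝ) ^ (-(9/8) : ℝ) := by
          apply Finset.sum_le_sum
          intro p hp
          simp only [primesUpTo, Finset.mem_filter, Finset.mem_range] at hp
          have hpX : (p:ℝ) ≤ X := by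
            calc (p:ℝ) ≤ (⌊X⌋₊ : ℝ) := by exact_mod_cast Nat.lt_succ_iff.mp hp.1
              _ ≤ X := Nat.floor_le hX0.le
          exact prime_term_bound X hX s hs p hp.2 hpX
      _ = 5 * X ^ (-(1/8) : ℝ) * ∑ p ∈ primesUpTo X, (p : ℝ) ^ (-(9/8) : ℝ) := by
          rw [Finset.mul_sum]
      _ ≤ 5 * X ^ (-(1/8) : ℝ) * ∑ n ∈ Finset.Icc 2 ⌊X⌋₊, ((n:ℝ)) ^ (-(9/8):ℝ) := by
          apply mul_le_mul_of_nonneg_left _ (by positivity)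
          apply Finset.sum_le_sum_of_subset_of_nonneg
          · intro p hp
            simp only [primesUpTo, Finset.mem_filter, Finset.mem_range] at hp
            simp only [Finset.mem_Icc]
            exact ⟨hp.2.two_le, Nat.lt_succ_iff.mp hp.1⟩
          · intro n _ _
            exact Real.rpow_nonneg (by positivity) _
      _ ≤ 5 * X ^ (-(1/8) : ℝ) * 8 := by
          apply mul_le_mul_of_nonneg_left (sum_pow_bound ⌊X⌋₊) (by positivity)
      _ = 40 * X ^ (-(1/8) : ℝ) := by ring
  have hX18 : X ^ (-(1/8) : ℝ) ≤ 8 / Real.log X := by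
    have h1 : Real.log X ≤ 8 * X ^ ((1/8) : ℝ) := by
      have h2 : Real.log (X ^ ((1/8):ℝ)) = (1/8) * Real.log X := Real.log_rpow hX0 _
      have h3 : Real.log (X ^ ((1/8):ℝ)) ≤ X ^ ((1/8):ℝ) :=
        Real.log_le_self (Real.rpow_nonneg hX0.le _)
      linarith
    have hXp : 0 < X ^ ((1/8) : ℝ) := Real.rpow_pos_of_pos hX0 _
    rw [Real.rpow_neg hX0.le, inv_eq_one_div, div_le_div_iff₀ hXp hlog]
    linarith
  have hT320 : ‖T‖ ≤ 320 / Real.log X := by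
    calc ‖T‖ ≤ 40 * X ^ (-(1/8) : ℝ) := hTbound
      _ ≤ 40 * (8 / Real.log X) := by linarith [hX18]
      _ = 320 / Real.log X := by ring
  have hT40 : ‖T‖ ≤ 40 := by
    have hle1 : X ^ (-(1/8) : ℝ) ≤ 1 :=
      Real.rpow_le_one_of_one_le_of_nonpos (by linarith) (by norm_num)
    calc ‖T‖ ≤ 40 * X ^ (-(1/8) : ℝ) := hTbound
      _ ≤ 40 * 1 := by linarith
      _ = 40 := by ring
  rw [hprod]
  have hnz : ‖(k:ℂ) * T‖ = |k| * ‖T‖ := by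
    rw [norm_mul, Complex.norm_real, Real.norm_eq_abs]
  rcases le_or_gt ‖(k:ℂ) * T‖ 1 with hz | hz
  · have hb := Complex.norm_exp_sub_one_le (x := (k:ℂ) * T) hz
    have h1 : 2 * ‖(k:ℂ) * T‖ ≤ 640 * |k| / Real.log X := by
      rw [hnz]
      have h2 : |k| * ‖T‖ ≤ |k| * (320 / Real.log X) :=
        mul_le_mul_of_nonneg_left hT320 (abs_nonneg k)
      calc 2 * (|k| * ‖T‖) ≤ 2 * (|k| * (320 / Real.log X)) := by linarith
        _ = 640 * |k| / Real.log X := by ring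
    have h3 : 640 * |k| ≤ 320 * (|k| + 1) * Q := by nlinarith [abs_nonneg k]
    calc ‖Complex.exp ((k:ℂ) * T) - 1‖ ≤ 2 * ‖(k:ℂ) * T‖ := hb
      _ ≤ 640 * |k| / Real.log X := h1
      _ ≤ 320 * (|k| + 1) * Q / Real.log X := by
          gcongr
  · have h1 : 1 < |k| * (320 / Real.log X) := by
      calc (1:ℝ) < ‖(k:ℂ) * T‖ := hz
        _ = |k| * ‖T‖ := hnz
        _ ≤ |k| * (320 / Real.log X) := mul_le_mul_of_nonneg_left hT320 (abs_nonneg k)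
    have h2 : Real.log X < 320 * |k| := by
      have e : |k| * (320 / Real.log X) = 320 * |k| / Real.log X := by ring
      rw [e, lt_div_iff₀ hlog] at h1
      linarith
    have hbound : ‖Complex.exp ((k:ℂ) * T) - 1‖ ≤ Q := by
      have hre : ((k:ℂ) * T).re ≤ ‖(k:ℂ) * T‖ := by
        exact Complex.re_le_norm _
      have hz40 : ‖(k:ℂ) * T‖ ≤ 40 * (|k| + 1) := by
        rw [hnz]
        have h4 : |k| * ‖T‖ ≤ |k| * 40 := mul_le_mul_of_nonneg_left hT40 (abs_nonneg k)
        nlinarith [abs_nonneg k]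
      have hexp := Real.exp_le_exp.mpr (le_trans hre hz40)
      calc ‖Complex.exp ((k:ℂ) * T) - 1‖ ≤ ‖Complex.exp ((k:ℂ) * T)‖ + ‖(1:ℂ)‖ := norm_sub_le _ _
        _ = Real.exp (((k:ℂ) * T).re) + 1 := by
            rw [Complex.norm_exp, norm_one]
        _ ≤ Real.exp (40 * (|k| + 1)) + 1 := by linarith
        _ = Q := by rw [hQ]
    calc ‖Complex.exp ((k:ℂ) * T) - 1‖ ≤ Q := hbound
      _ ≤ 320 * (|k| + 1) * Q / Real.log X := by
          rw [le_div_iff₀ hlog]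
          calc Q * Real.log X ≤ Q * (320 * (|k| + 1)) :=
                mul_le_mul_of_nonneg_left (by linarith [abs_nonneg k]) hQ0
            _ = 320 * (|k| + 1) * Q := by ring

end GHK
end

section
/- There exist constants C and X_0 (depending only on f) such that for all real X ≥ X_0, one has | ∑_{n=1}^∞ (1/n) · v(e^{n/log X})² − log log X − γ | ≤ C / log X, where γ is Euler's constant. -/
open Complex MeasureTheory

namespace GHK

section Aux

open MeasureTheory Set

variable {f : ℝ → ℝ} {X : ℝ}

lemma f_eq_zero (hf : IsProfile f) {y : ℝ} (hy : y ∉ Set.Icc (0:ℝ) 1) : f y = 0 := by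
  by_contra h
  exact hy (hf.2.2.1 h)

lemma uf_nonneg (hf : IsProfile f) (hX : 0 ≤ X) {x : ℝ} (hx : 0 < x) : 0 ≤ uf f X x :=
  mul_nonneg (div_nonneg hX hx.le) (hf.2.1 _)

lemma uf_zero (hf : IsProfile f) (hX : 0 < X) {x : ℝ} (hx : Real.exp 1 < x) :
    uf f X x = 0 := by
  have h1 : 0 < Real.log (x / Real.exp 1) :=
    Real.log_pos (by rw [lt_div_iff₀ (Real.exp_pos 1)]; simpa using hx)
  have : (1:ℝ) < X * Real.log (x / Real.exp 1) + 1 := by nlinarith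
  rw [uf, f_eq_zero hf (by simp [Set.mem_Icc]; intro _; linarith), mul_zero]

lemma uf_contOn (hf : IsProfile f) {a : ℝ} (ha : 0 < a) :
    ContinuousOn (uf f X) (Set.Ici a) := by
  have hne : ∀ x ∈ Set.Ici a, x ≠ 0 := fun x hx => (lt_of_lt_of_le ha hx).ne'
  have hlog : ContinuousOn (fun x : ℝ => Real.log (x / Real.exp 1)) (Set.Ici a) := by
    apply Real.continuousOn_log.comp ((continuousOn_id).div_const _)
    intro x hx
    simp only [Set.mem_compl_iff, Set.mem_singleton_iff]
    exact div_ne_zero (hne x hx) (Real.exp_ne_zero 1)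
  exact (continuousOn_const.div continuousOn_id hne).mul
    (hf.1.continuous.comp_continuousOn ((continuousOn_const.mul hlog).add continuousOn_const))

lemma integrableOn_uf (hf : IsProfile f) (hX : 0 < X) {a : ℝ} (ha : 0 < a) :
    IntegrableOn (uf f X) (Set.Ioi a) := by
  set c := max a (Real.exp 1) with hc
  have hac : a ≤ c := le_max_left _ _
  rw [← Set.Ioc_union_Ioi_eq_Ioi hac]
  apply IntegrableOn.union
  · exact (((uf_contOn hf ha).mono Set.Icc_subset_Ici_self).integrableOn_Icc).mono_set
      Set.Ioc_subset_Icc_self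
  · exact (integrableOn_congr_fun (g := fun _ => (0:ℝ))
      (fun x hx => uf_zero hf hX (lt_of_le_of_lt (le_max_right a _) hx)) measurableSet_Ioi).mpr
      integrableOn_zero

lemma vf_eq_add (hf : IsProfile f) (hX : 0 < X) {a b : ℝ} (ha : 0 < a) (hab : a ≤ b) :
    vf f X a = (∫ x in Set.Ioc a b, uf f X x) + vf f X b := by
  rw [vf, vf, ← setIntegral_union Set.Ioc_disjoint_Ioi_same measurableSet_Ioi
      ((integrableOn_uf hf hX ha).mono_set Set.Ioc_subset_Ioi_self)
      (integrableOn_uf hf hX (lt_of_lt_of_le ha hab)),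
    Set.Ioc_union_Ioi_eq_Ioi hab]

lemma vf_zero (hf : IsProfile f) (hX : 0 < X) {t : ℝ} (ht : Real.exp 1 ≤ t) :
    vf f X t = 0 := by
  rw [vf, setIntegral_congr_fun measurableSet_Ioi
    (fun x (hx : x ∈ Set.Ioi t) => uf_zero hf hX (lt_of_le_of_lt ht hx))]
  simp

lemma vf_nonneg (hf : IsProfile f) (hX : 0 ≤ X) {t : ℝ} (ht : 0 < t) : 0 ≤ vf f X t :=
  setIntegral_nonneg measurableSet_Ioi (fun x hx => uf_nonneg hf hX (ht.trans hx))

lemma vf_one (hf : IsProfile f) (hX : 1 ≤ X) {t : ℝ} (ht : 0 < t)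
    (ht2 : t ≤ Real.exp (1 - 1/X)) : vf f X t = 1 := by
  have hX0 : 0 < X := lt_of_lt_of_le one_pos hX
  have hXinv : 0 ≤ 1/X := by positivity
  have hte : t ≤ Real.exp 1 := ht2.trans (Real.exp_le_exp.mpr (by linarith))
  set g : ℝ → ℝ := fun x => X * Real.log (x / Real.exp 1) + 1 with hg
  have hkey : ∫ x in t..(Real.exp 1), uf f X x = ∫ w in (g t)..(g (Real.exp 1)), f w := by
    rw [← intervalIntegral.integral_comp_smul_deriv (f := g) (f' := fun x => X / x) (g := f)
      ?_ ?_ hf.1.continuous]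
    · apply intervalIntegral.integral_congr
      intro x _
      simp [uf, hg, smul_eq_mul]
    · intro x hx
      rw [Set.uIcc_of_le hte] at hx
      have hx0 : 0 < x := lt_of_lt_of_le ht hx.1
      have h1 : HasDerivAt (fun y : ℝ => y / Real.exp 1) (1 / Real.exp 1) x :=
        (hasDerivAt_id x).div_const _
      have h2 : HasDerivAt Real.log (x / Real.exp 1)⁻¹ (x / Real.exp 1) :=
        Real.hasDerivAt_log (div_ne_zero hx0.ne' (Real.exp_ne_zero 1))
      have h3 := h2.comp x h1
      have h4 := (h3.const_mul X).add_const 1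
      refine h4.congr_deriv ?_
      field_simp
    · rw [Set.uIcc_of_le hte]
      exact continuousOn_const.div continuousOn_id (fun x hx => (lt_of_lt_of_le ht hx.1).ne')
  have hge : g (Real.exp 1) = 1 := by
    simp [hg, div_self (Real.exp_ne_zero 1)]
  have hgt : g t ≤ 0 := by
    have hlt : Real.log t ≤ 1 - 1/X := (Real.log_le_iff_le_exp ht).mpr ht2
    have hld : Real.log (t / Real.exp 1) = Real.log t - 1 := by
      rw [Real.log_div ht.ne' (Real.exp_ne_zero 1), Real.log_exp]
    have h5 : X * (Real.log t - 1) ≤ X * (-(1/X)) := by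
      apply mul_le_mul_of_nonneg_left (by linarith) hX0.le
    have h6 : X * (-(1/X)) = -1 := by field_simp
    simp only [hg, hld]
    linarith [h5.trans_eq h6]
  have hint : ∀ a b : ℝ, IntervalIntegrable f volume a b :=
    fun a b => hf.1.continuous.intervalIntegrable a b
  have hz : ∫ w in (g t)..(0:ℝ), f w = 0 := by
    rw [intervalIntegral.integral_of_le hgt, MeasureTheory.integral_Ioc_eq_integral_Ioo,
      setIntegral_congr_fun measurableSet_Ioo
        (fun x (hx : x ∈ Set.Ioo (g t) 0) => f_eq_zero hf (by simp [Set.mem_Icc]; intro h; linarith [hx.2]))]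
    simp
  calc vf f X t = (∫ x in Set.Ioc t (Real.exp 1), uf f X x) + vf f X (Real.exp 1) :=
        vf_eq_add hf hX0 ht hte
    _ = ∫ x in t..(Real.exp 1), uf f X x := by
        rw [vf_zero hf hX0 le_rfl, add_zero, intervalIntegral.integral_of_le hte]
    _ = ∫ w in (g t)..(1:ℝ), f w := by rw [hkey, hge]
    _ = (∫ w in (g t)..(0:ℝ), f w) + ∫ w in (0:ℝ)..(1:ℝ), f w :=
        (intervalIntegral.integral_add_adjacent_intervals (hint _ _) (hint _ _)).symm
    _ = 1 := by rw [hz, zero_add, hf.2.2.2]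

lemma vf_le_one (hf : IsProfile f) (hX : 1 ≤ X) {t : ℝ} (ht : 1 ≤ t) : vf f X t ≤ 1 := by
  have hX0 : 0 < X := lt_of_lt_of_le one_pos hX
  have h1 : vf f X 1 = 1 := vf_one hf hX one_pos (Real.one_le_exp (by
    have : 1/X ≤ 1 := by rw [div_le_one hX0]; exact hX
    linarith))
  have h2 := vf_eq_add hf hX0 one_pos ht
  have h3 : 0 ≤ ∫ x in Set.Ioc 1 t, uf f X x :=
    setIntegral_nonneg measurableSet_Ioc (fun x hx => uf_nonneg hf hX0.le (lt_trans one_pos hx.1))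
  linarith [h1 ▸ h2]


lemma harmonic_gamma_bound {n : ℕ} (hn : 1 ≤ n) :
    0 ≤ (harmonic n : ℝ) - Real.log n - Real.eulerMascheroniConstant ∧
    (harmonic n : ℝ) - Real.log n - Real.eulerMascheroniConstant ≤ 1 / n := by
  have h1 := Real.eulerMascheroniConstant_lt_eulerMascheroniSeq' n
  have h2 := Real.eulerMascheroniSeq_lt_eulerMascheroniConstant n
  rw [Real.eulerMascheroniSeq', if_neg (by omega)] at h1
  rw [Real.eulerMascheroniSeq] at h2
  have hn0 : (0:ℝ) < n := by exact_mod_cast hn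
  have hlog : Real.log ((n:ℝ)+1) - Real.log n ≤ 1 / n := by
    have h3 := Real.log_le_sub_one_of_pos (x := ((n:ℝ)+1)/n) (by positivity)
    rw [Real.log_div (by positivity) hn0.ne'] at h3
    have h4 : ((n:ℝ)+1)/n - 1 = 1/n := by field_simp; ring
    linarith
  constructor <;> push_cast at * <;> [linarith; linarith]

end Aux

/-- `∑_{n ≥ 1} (1/n) v(e^{n/log X})² = log log X + γ + O(1/log X)`. -/
theorem sum_v_squared (f : ℝ → ℝ) (hf : IsProfile f) :
    ∃ C X₀ : ℝ, ∀ X : ℝ, X₀ ≤ X →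
      |(∑' n : ℕ, (1 / ((n : ℝ) + 1)) * (vf f X (Real.exp (((n : ℝ) + 1) / Real.log X))) ^ 2)
          - Real.log (Real.log X) - Real.eulerMascheroniConstant|
        ≤ C / Real.log X := by
  refine ⟨8, Real.exp 10, fun X hX => ?_⟩
  set L := Real.log X with hLdef
  have hL : (10:ℝ) ≤ L := by
    rw [hLdef, show (10:ℝ) = Real.log (Real.exp 10) from (Real.log_exp 10).symm]
    exact Real.log_le_log (Real.exp_pos 10) hX
  have hL0 : (0:ℝ) < L := by linarith
  have hX1 : (1:ℝ) ≤ X := le_trans (Real.one_le_exp (by norm_num)) hX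
  have hX0 : (0:ℝ) < X := lt_of_lt_of_le one_pos hX1
  have hLX : L ≤ X := (Real.log_le_sub_one_of_pos hX0).trans (by linarith)
  set M := ⌊L⌋₊ with hMdef
  have hML : (M:ℝ) ≤ L := Nat.floor_le hL0.le
  have hLM : L < M + 1 := Nat.lt_floor_add_one L
  have hM10 : 10 ≤ M := Nat.le_floor (by exact_mod_cast hL)
  set a : ℕ → ℝ :=
    fun n => (1 / ((n : ℝ) + 1)) * (vf f X (Real.exp (((n : ℝ) + 1) / L))) ^ 2 with hadef
  -- value of v on the main range
  have hv1 : ∀ n : ℕ, ((n:ℝ) + 1) ≤ L - 1 → vf f X (Real.exp (((n:ℝ)+1)/L)) = 1 := by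
    intro n hn
    apply vf_one hf hX1 (Real.exp_pos _)
    apply Real.exp_le_exp.mpr
    rw [div_le_iff₀ hL0]
    have h1 : L / X ≤ 1 := by rw [div_le_one hX0]; exact hLX
    have h2 : (1 - 1/X) * L = L - L/X := by ring
    linarith
  have hv0 : ∀ n : ℕ, L ≤ (n:ℝ) + 1 → vf f X (Real.exp (((n:ℝ)+1)/L)) = 0 := by
    intro n hn
    apply vf_zero hf hX0
    apply Real.exp_le_exp.mpr
    rw [le_div_iff₀ hL0]; linarith
  -- the tsum is a finite sum
  have hsum : (∑' n : ℕ, a n) = ∑ n ∈ Finset.range M, a n := by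
    apply tsum_eq_sum
    intro n hn
    have hMn : M ≤ n := by simpa using hn
    have : L ≤ (n:ℝ) + 1 := by
      have : (M:ℝ) ≤ n := by exact_mod_cast hMn
      linarith
    simp [hadef, hv0 n this]
  set N := M - 1 with hNdef
  have hM1 : 1 ≤ M := le_trans (by norm_num) hM10
  have hNM : N + 1 = M := Nat.succ_pred_eq_of_pos hM1
  have hNcast : (N:ℝ) = (M:ℝ) - 1 := by
    rw [hNdef, Nat.cast_sub hM1]; norm_num
  have hN1 : 1 ≤ N := Nat.le_sub_one_of_lt (lt_of_lt_of_le (by norm_num) hM10)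
  have hN0 : (0:ℝ) < N := by exact_mod_cast Nat.lt_of_lt_of_le Nat.zero_lt_one hN1
  -- main part: harmonic sum
  have hmain : ∑ n ∈ Finset.range N, a n = ((harmonic N : ℚ) : ℝ) := by
    have h : ∀ n ∈ Finset.range N, a n = 1 / ((n:ℝ)+1) := by
      intro n hn
      have h1 : (n:ℝ) + 1 ≤ L - 1 := by
        have h2 : n < N := Finset.mem_range.mp hn
        have h3 : (n:ℝ) + 1 ≤ (N:ℝ) := by exact_mod_cast h2
        rw [hNcast] at h3; linarith
      simp [hadef, hv1 n h1]
    rw [Finset.sum_congr rfl h, harmonic]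
    push_cast
    simp [one_div]
  -- last term bound
  have hlast : 0 ≤ a N ∧ a N ≤ 1 / M := by
    have ht1 : (1:ℝ) ≤ Real.exp (((N:ℝ)+1)/L) := Real.one_le_exp (by positivity)
    have hv := vf_le_one hf hX1 ht1
    have hv0' := vf_nonneg hf hX0.le (lt_of_lt_of_le one_pos ht1)
    have hMc : (N:ℝ) + 1 = (M:ℝ) := by rw [hNcast]; ring
    constructor
    · apply mul_nonneg (by positivity) (sq_nonneg _)
    · rw [hadef]
      simp only [hMc]
      have hM0 : (0:ℝ) < M := by
        have : (1:ℝ) ≤ M := by exact_mod_cast le_trans (by norm_num) hM10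
        linarith
      have : (vf f X (Real.exp ((M:ℝ)/L))) ^ 2 ≤ 1 := by
        rw [hMc] at hv hv0'; nlinarith
      calc 1/(M:ℝ) * (vf f X (Real.exp ((M:ℝ)/L)))^2 ≤ 1/(M:ℝ) * 1 := by
            apply mul_le_mul_of_nonneg_left this (by positivity)
        _ = 1/(M:ℝ) := mul_one _
  -- gamma bound
  obtain ⟨hg1, hg2⟩ := harmonic_gamma_bound hN1
  -- log comparison
  have hNL : L - 2 < (N:ℝ) := by rw [hNcast]; linarith
  have hNL2 : (N:ℝ) ≤ L - 1 := by rw [hNcast]; linarith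
  have hdle : Real.log L - Real.log N ≤ 2 / N := by
    have h := Real.log_le_sub_one_of_pos (x := L / N) (by positivity)
    rw [Real.log_div hL0.ne' hN0.ne'] at h
    have h4 : L / (N:ℝ) - 1 = (L - N)/N := by field_simp
    have h5 : (L - (N:ℝ))/N ≤ 2/N := by gcongr; linarith
    linarith
  have hd0 : 0 ≤ Real.log L - Real.log N :=
    sub_nonneg.mpr (Real.log_le_log hN0 (by linarith))
  -- assemble
  rw [hsum, ← hNM, Finset.sum_range_succ, hmain]
  have hM0 : (0:ℝ) < M := by exact_mod_cast Nat.lt_of_lt_of_le Nat.zero_lt_one hM1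
  have hLinv : (0:ℝ) < 1/L := by positivity
  have h1N : 1/(N:ℝ) ≤ 2/L := by
    rw [div_le_div_iff₀ hN0 hL0]; linarith
  have h2N : 2/(N:ℝ) ≤ 4/L := by
    rw [div_le_div_iff₀ hN0 hL0]; linarith
  have hM2 : 1/(M:ℝ) ≤ 2/L := by
    rw [div_le_div_iff₀ hM0 hL0]; linarith
  have e8 : (8:ℝ)/L = 8*(1/L) := by ring
  have e4 : (4:ℝ)/L = 4*(1/L) := by ring
  have e2 : (2:ℝ)/L = 2*(1/L) := by ring
  have eN : (2:ℝ)/(N:ℝ) = 2*(1/(N:ℝ)) := by ring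
  rw [abs_le]
  constructor <;> [linarith [hlast.1, hlast.2]; linarith [hlast.1, hlast.2]]

end GHK
end

section
/- There is an absolute constant C such that for all positive integers a, b with gcd(a, b) = 1 and all real x with b ≤ x, one has | ∑_{n ≤ x, gcd(an, b) = 1} 1/n − (φ(b)/b) log x | ≤ C log log(3b), where the sum runs over positive integers n ≤ x with gcd(an, b) = 1 and φ is Euler's totient function. -/
open Finset ArithmeticFunction
open scoped ArithmeticFunction.Moebius

namespace GHK


lemma squarefree_prod_primes {s : Finset ℕ} (hs : ∀ p ∈ s, p.Prime) :
    Squarefree (∏ p ∈ s, p) := by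
  classical
  induction s using Finset.induction_on with
  | empty => simpa using squarefree_one
  | @insert p s hp ih =>
    rw [Finset.prod_insert hp]
    have hpp : p.Prime := hs p (Finset.mem_insert_self _ _)
    have hs' : ∀ q ∈ s, q.Prime := fun q hq => hs q (Finset.mem_insert_of_mem hq)
    have hcop : Nat.Coprime p (∏ q ∈ s, q) := by
      rw [hpp.coprime_iff_not_dvd]
      intro hdvd
      rcases (Nat.Prime.prime hpp).exists_mem_finset_dvd hdvd with ⟨q, hq, hpq⟩
      exact hp (((hs' q hq).dvd_iff_eq hpp.ne_one).1 hpq ▸ hq)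
    exact (Nat.squarefree_mul hcop).2 ⟨hpp.squarefree, ih hs'⟩

/-- The multiplicative arithmetic function `d ↦ 1/d`. -/
noncomputable def finv : ArithmeticFunction ℝ := ⟨fun d => (d : ℝ)⁻¹, by simp⟩

lemma finv_apply (d : ℕ) : finv d = (d : ℝ)⁻¹ := rfl

lemma finv_mult : finv.IsMultiplicative := by
  refine ⟨by simp [finv_apply], fun {m n} _ => ?_⟩
  simp [finv_apply, mul_inv, mul_comm]

lemma sum_moebius_div (m : ℕ) (hm : m ≠ 0) :
    ∑ d ∈ m.divisors, (μ d : ℝ) / d = (Nat.totient m : ℝ) / m := by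
  classical
  set r := ∏ p ∈ m.primeFactors, p with hr
  have hrprimes : ∀ p ∈ m.primeFactors, p.Prime := fun p hp => Nat.prime_of_mem_primeFactors hp
  have hrsq : Squarefree r := squarefree_prod_primes hrprimes
  have hrdvd : r ∣ m := Nat.prod_primeFactors_dvd m
  have step1 : ∑ d ∈ m.divisors, (μ d : ℝ) / d = ∑ d ∈ r.divisors, (μ d : ℝ) / d := by
    refine (Finset.sum_subset (Nat.divisors_subset_of_dvd hm hrdvd) ?_).symm
    intro d hd hdr
    have hddvd : d ∣ m := (Nat.mem_divisors.mp hd).1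
    by_cases hsq : Squarefree d
    · exfalso
      apply hdr
      rw [Nat.mem_divisors]
      refine ⟨?_, hrsq.ne_zero⟩
      calc d = ∏ p ∈ d.primeFactors, p := (Nat.prod_primeFactors_of_squarefree hsq).symm
        _ ∣ r := Finset.prod_dvd_prod_of_subset _ _ _ (Nat.primeFactors_mono hddvd hm)
    · rw [moebius_eq_zero_of_not_squarefree hsq]
      simp
  have step2 : ∑ d ∈ r.divisors, (μ d : ℝ) * finv d
      = ∏ p ∈ r.primeFactors, (1 - finv p) :=
    (IsMultiplicative.prodPrimeFactors_one_sub_of_squarefree finv finv_mult hrsq).symm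
  have hpf : r.primeFactors = m.primeFactors := Nat.primeFactors_prod hrprimes
  have step3 : ((Nat.totient m : ℝ)) = (m : ℝ) * ∏ p ∈ m.primeFactors, (1 - (p : ℝ)⁻¹) := by
    have := Nat.totient_eq_mul_prod_factors m
    have := congrArg (fun q : ℚ => (q : ℝ)) this
    push_cast at this
    simpa using this
  have hm' : (m : ℝ) ≠ 0 := Nat.cast_ne_zero.mpr hm
  rw [step1]
  have : ∑ d ∈ r.divisors, (μ d : ℝ) / d = ∏ p ∈ m.primeFactors, (1 - (p : ℝ)⁻¹) := by
    rw [← hpf,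
      show (∏ p ∈ r.primeFactors, (1 - (p : ℝ)⁻¹)) = ∏ p ∈ r.primeFactors, (1 - finv p) from
        Finset.prod_congr rfl (fun p _ => rfl), ← step2]
    exact Finset.sum_congr rfl fun d _ => by rw [finv_apply, div_eq_mul_inv]
  rw [this, step3]
  field_simp

lemma totient_div_le_one (m : ℕ) : (Nat.totient m : ℝ) / m ≤ 1 := by
  rcases Nat.eq_zero_or_pos m with h | h
  · simp [h]
  · rw [div_le_one (by exact_mod_cast h)]
    exact_mod_cast Nat.totient_le m

lemma totient_div_nonneg (m : ℕ) : 0 ≤ (Nat.totient m : ℝ) / m := by positivity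

lemma abs_moebius_le_one (d : ℕ) : |(μ d : ℝ)| ≤ 1 := by
  by_cases h : Squarefree d
  · have := abs_moebius_eq_one_of_squarefree h
    have : |(μ d : ℝ)| = 1 := by exact_mod_cast congrArg (fun z : ℤ => (z : ℝ)) this
    simp [this]
  · simp [moebius_eq_zero_of_not_squarefree h]



lemma theta_le (n : ℕ) :
    ∑ p ∈ (range (n + 1)).filter Nat.Prime, Real.log p ≤ n * Real.log 4 := by
  have h1 : ∑ p ∈ (range (n + 1)).filter Nat.Prime, Real.log p
      = Real.log (primorial n) := by
    rw [primorial, ← Real.log_prod]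
    · push_cast; rfl
    · intro p hp
      have := (Finset.mem_filter.mp hp).2
      exact_mod_cast this.pos.ne'
  rw [h1]
  calc Real.log (primorial n) ≤ Real.log ((4 : ℕ) ^ n) := by
        apply Real.log_le_log (by exact_mod_cast primorial_pos n)
        exact_mod_cast primorial_le_4_pow n
    _ = n * Real.log 4 := by push_cast [Real.log_pow]; norm_num

lemma mertens_aux (n : ℕ) (hn : 1 ≤ n) :
    ∑ p ∈ (range (n + 1)).filter Nat.Prime, Real.log p / p ≤ 11 * Real.log n := by
  induction n using Nat.strong_induction_on with
  | _ n ih =>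
  rcases eq_or_lt_of_le hn with h1 | h2
  · rw [← h1]
    have : (range 2).filter Nat.Prime = ∅ := by decide
    rw [show (1:ℕ) + 1 = 2 from rfl, this]
    simp
  · -- n ≥ 2
    set m := (n + 1) / 2 with hm
    have hm1 : 1 ≤ m := by omega
    have hmn : m < n := by omega
    have h4m : 4 * m ≤ 3 * n := by omega
    have hn2m : n ≤ 2 * m := by omega
    -- split the sum
    have hsplit : (range (n + 1)).filter Nat.Prime
        = ((range (m + 1)).filter Nat.Prime) ∪ ((Ico (m + 1) (n + 1)).filter Nat.Prime) := by
      rw [← Finset.filter_union]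
      congr 1
      simp only [range_eq_Ico]
      exact (Finset.Ico_union_Ico_eq_Ico (by omega) (by omega)).symm
    have hdisj : Disjoint ((range (m + 1)).filter Nat.Prime)
        ((Ico (m + 1) (n + 1)).filter Nat.Prime) := by
      apply Finset.disjoint_filter_filter
      rw [range_eq_Ico]
      exact Finset.Ico_disjoint_Ico_consecutive 0 (m + 1) (n + 1)
    rw [hsplit, Finset.sum_union hdisj]
    have hbig : ∑ p ∈ (Ico (m + 1) (n + 1)).filter Nat.Prime, Real.log p / p
        ≤ 2 * Real.log 4 := by
      have hstep : ∀ p ∈ (Ico (m + 1) (n + 1)).filter Nat.Prime,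
          Real.log p / p ≤ 2 / n * Real.log p := by
        intro p hp
        obtain ⟨hpI, hpP⟩ := Finset.mem_filter.mp hp
        obtain ⟨hp1, hp2⟩ := Finset.mem_Ico.mp hpI
        have hpn : (n : ℝ) ≤ 2 * p := by
          have : n ≤ 2 * p := by omega
          exact_mod_cast this
        have hlp : 0 ≤ Real.log p := Real.log_nonneg (by exact_mod_cast hpP.one_lt.le)
        have hppos : (0:ℝ) < p := by exact_mod_cast hpP.pos
        have hnpos : (0:ℝ) < n := by exact_mod_cast hn
        have hinv : (1:ℝ)/p ≤ 2/n := by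
          rw [div_le_div_iff₀ hppos hnpos]; nlinarith
        calc Real.log p / p = Real.log p * (1/p) := by ring
          _ ≤ Real.log p * (2/n) := mul_le_mul_of_nonneg_left hinv hlp
          _ = 2 / n * Real.log p := by ring
      calc ∑ p ∈ (Ico (m + 1) (n + 1)).filter Nat.Prime, Real.log p / p
          ≤ ∑ p ∈ (Ico (m + 1) (n + 1)).filter Nat.Prime, 2 / n * Real.log p :=
            Finset.sum_le_sum hstep
        _ = 2 / n * ∑ p ∈ (Ico (m + 1) (n + 1)).filter Nat.Prime, Real.log p := by
            rw [Finset.mul_sum]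
        _ ≤ 2 / n * ∑ p ∈ (range (n + 1)).filter Nat.Prime, Real.log p := by
            apply mul_le_mul_of_nonneg_left _ (by positivity)
            apply Finset.sum_le_sum_of_subset_of_nonneg
            · rw [hsplit]; exact Finset.subset_union_right
            · intro p hp _
              exact Real.log_nonneg (by
                exact_mod_cast (Finset.mem_filter.mp hp).2.one_lt.le)
        _ ≤ 2 / n * (n * Real.log 4) := by
            apply mul_le_mul_of_nonneg_left (theta_le n) (by positivity)
        _ = 2 * Real.log 4 := by
            have hnpos : (0:ℝ) < n := by exact_mod_cast hn
            field_simp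
    have hih := ih m hmn hm1
    have hlog : 11 * Real.log m + 2 * Real.log 4 ≤ 11 * Real.log n := by
      have hratio : Real.log (4 / 3 : ℝ) ≤ Real.log n - Real.log m := by
        rw [← Real.log_div (by positivity) (by positivity)]
        apply Real.log_le_log (by norm_num)
        rw [div_le_div_iff₀ (by norm_num) (by positivity)]
        have : (4 : ℝ) * m ≤ 3 * n := by exact_mod_cast h4m
        linarith
      have hnum : 11 * Real.log 3 ≤ 9 * Real.log 4 := by
        have h : ((3 : ℝ) ^ (11 : ℕ)) ≤ (4 : ℝ) ^ (9 : ℕ) := by norm_num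
        have := Real.log_le_log (by positivity) h
        rw [Real.log_pow, Real.log_pow] at this
        push_cast at this
        linarith
      rw [Real.log_div (by norm_num) (by norm_num)] at hratio
      linarith
    linarith




lemma log_sum_primeFactors_le (b : ℕ) (hb : 1 ≤ b) :
    ∑ p ∈ b.primeFactors, Real.log p ≤ Real.log b := by
  have h1 : ∑ p ∈ b.primeFactors, Real.log p
      = Real.log ((∏ p ∈ b.primeFactors, p : ℕ)) := by
    rw [Nat.cast_prod, Real.log_prod
      (fun p hp => by exact_mod_cast (Nat.prime_of_mem_primeFactors hp).pos.ne')]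
  have hpos : 0 < ∏ p ∈ b.primeFactors, p :=
    Finset.prod_pos fun p hp => (Nat.prime_of_mem_primeFactors hp).pos
  rw [h1]
  exact Real.log_le_log (by exact_mod_cast hpos)
    (by exact_mod_cast Nat.le_of_dvd hb (Nat.prod_primeFactors_dvd b))

lemma primefactors_mertens (b : ℕ) (hb : 1 ≤ b) :
    ∑ p ∈ b.primeFactors, Real.log p / p
      ≤ 11 * Real.log (Real.log (3 * b)) + 17 := by
  classical
  set z : ℕ := ⌈Real.log b⌉₊ + 2 with hz
  have hz2 : 2 ≤ z := by omega
  have hzpos : (0:ℝ) < z := by positivity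
  have hlogb_nonneg : 0 ≤ Real.log b := Real.log_nonneg (by exact_mod_cast hb)
  have hzlogb : Real.log b ≤ z := by
    have := Nat.le_ceil (Real.log b)
    rw [hz]; push_cast
    push_cast at this
    linarith
  -- split
  rw [← Finset.sum_filter_add_sum_filter_not b.primeFactors (· ≤ z)]
  have hsmall : ∑ p ∈ b.primeFactors.filter (· ≤ z), Real.log p / p ≤ 11 * Real.log z := by
    calc ∑ p ∈ b.primeFactors.filter (· ≤ z), Real.log p / p
        ≤ ∑ p ∈ (range (z + 1)).filter Nat.Prime, Real.log p / p := by
          apply Finset.sum_le_sum_of_subset_of_nonneg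
          · intro p hp
            obtain ⟨hp1, hp2⟩ := Finset.mem_filter.mp hp
            exact Finset.mem_filter.mpr ⟨Finset.mem_range.mpr (by omega),
              Nat.prime_of_mem_primeFactors hp1⟩
          · intro p hp _
            have := (Finset.mem_filter.mp hp).2
            positivity
      _ ≤ 11 * Real.log z := mertens_aux z (by omega)
  have hbig : ∑ p ∈ b.primeFactors.filter (fun p => ¬ p ≤ z), Real.log p / p ≤ 1 := by
    have hstep : ∀ p ∈ b.primeFactors.filter (fun p => ¬ p ≤ z),
        Real.log p / p ≤ Real.log p / z := by
      intro p hp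
      obtain ⟨hp1, hp2⟩ := Finset.mem_filter.mp hp
      have hpz : (z:ℝ) ≤ p := by exact_mod_cast (by omega : z ≤ p)
      have hl : 0 ≤ Real.log p :=
        Real.log_nonneg (by exact_mod_cast (Nat.prime_of_mem_primeFactors hp1).one_lt.le)
      gcongr
    calc ∑ p ∈ b.primeFactors.filter (fun p => ¬ p ≤ z), Real.log p / p
        ≤ ∑ p ∈ b.primeFactors.filter (fun p => ¬ p ≤ z), Real.log p / z :=
          Finset.sum_le_sum hstep
      _ = (∑ p ∈ b.primeFactors.filter (fun p => ¬ p ≤ z), Real.log p) / z := by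
          rw [Finset.sum_div]
      _ ≤ (∑ p ∈ b.primeFactors, Real.log p) / z := by
          refine (div_le_div_iff_of_pos_right hzpos).mpr ?_
          apply Finset.sum_le_sum_of_subset_of_nonneg (Finset.filter_subset _ _)
          intro p hp _
          exact Real.log_nonneg (by exact_mod_cast (Nat.prime_of_mem_primeFactors hp).one_lt.le)
      _ ≤ Real.log b / z := by
          exact (div_le_div_iff_of_pos_right hzpos).mpr (log_sum_primeFactors_le b hb)
      _ ≤ 1 := by
          rw [div_le_one hzpos]; exact hzlogb
  -- combine
  have hlog3b : 1 ≤ Real.log (3 * b) := by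
    rw [Real.le_log_iff_exp_le (by positivity)]
    calc Real.exp 1 ≤ 2.7182818286 := Real.exp_one_lt_d9.le
      _ ≤ 3 := by norm_num
      _ ≤ 3 * b := by exact_mod_cast Nat.le_mul_of_pos_right 3 hb
  have hzbound : (z:ℝ) ≤ 4 * Real.log (3 * b) := by
    have h1 : (z:ℝ) ≤ Real.log b + 3 := by
      have := Nat.ceil_lt_add_one hlogb_nonneg
      rw [hz]; push_cast
      linarith
    have h2 : Real.log b ≤ Real.log (3 * b) := by
      apply Real.log_le_log (by exact_mod_cast hb)
      push_cast
      nlinarith [(by exact_mod_cast hb : (1:ℝ) ≤ b)]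
    linarith
  have hlogz : Real.log z ≤ Real.log 4 + Real.log (Real.log (3 * b)) := by
    calc Real.log z ≤ Real.log (4 * Real.log (3 * b)) := Real.log_le_log hzpos hzbound
      _ = Real.log 4 + Real.log (Real.log (3 * b)) := by
          rw [Real.log_mul (by norm_num) (by linarith)]
  have hlog4 : Real.log 4 ≤ 1.4 := by
    have h2 : Real.log 2 < 0.6931471808 := Real.log_two_lt_d9
    have : Real.log 4 = 2 * Real.log 2 := by
      rw [show (4:ℝ) = 2^(2:ℕ) by norm_num, Real.log_pow]; push_cast; ring
    linarith
  linarith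



lemma harmonic_cast_eq (k : ℕ) : (harmonic k : ℝ) = ∑ i ∈ Icc 1 k, (i : ℝ)⁻¹ := by
  rw [harmonic_eq_sum_Icc]
  push_cast
  rfl

lemma inner_sum (d N : ℕ) (hd : 0 < d) :
    ∑ n ∈ (Icc 1 N).filter (fun n => d ∣ n), (1 : ℝ) / n
      = (d : ℝ)⁻¹ * (harmonic (N / d) : ℝ) := by
  rw [harmonic_cast_eq, Finset.mul_sum]
  refine Finset.sum_nbij' (fun n => n / d) (fun m => d * m) ?_ ?_ ?_ ?_ ?_
  · intro n hn
    obtain ⟨hn1, hn2⟩ := Finset.mem_filter.mp hn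
    obtain ⟨hn3, hn4⟩ := Finset.mem_Icc.mp hn1
    refine Finset.mem_Icc.mpr ⟨?_, Nat.div_le_div_right hn4⟩
    exact Nat.one_le_div_iff hd |>.mpr (Nat.le_of_dvd (by omega) hn2)
  · intro m hm
    obtain ⟨hm1, hm2⟩ := Finset.mem_Icc.mp hm
    refine Finset.mem_filter.mpr ⟨Finset.mem_Icc.mpr ⟨Nat.mul_pos hd hm1, ?_⟩, Dvd.intro m rfl⟩
    calc d * m ≤ d * (N / d) := Nat.mul_le_mul_left d hm2
      _ ≤ N := Nat.mul_div_le N d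
  · intro n hn
    exact Nat.mul_div_cancel' (Finset.mem_filter.mp hn).2
  · intro m _
    exact Nat.mul_div_cancel_left m hd
  · intro n hn
    obtain ⟨hn1, hn2⟩ := Finset.mem_filter.mp hn
    obtain ⟨c, rfl⟩ := hn2
    have hcd : d * c / d = c := Nat.mul_div_cancel_left c hd
    simp only [hcd]
    push_cast
    rw [one_div, mul_inv]

lemma moebius_sum_eq (k : ℕ) :
    (∑ d ∈ k.divisors, μ d) = if k = 1 then 1 else 0 := by
  have h := congrArg (fun f : ArithmeticFunction ℤ => f k) moebius_mul_coe_zeta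
  simp only [coe_mul_zeta_apply, one_apply] at h
  exact h

lemma divisors_filter_dvd (b n : ℕ) (hb : 0 < b) (hn : 0 < n) :
    b.divisors.filter (· ∣ n) = (Nat.gcd n b).divisors := by
  ext d
  simp only [Finset.mem_filter, Nat.mem_divisors]
  constructor
  · rintro ⟨⟨hdb, _⟩, hdn⟩
    exact ⟨Nat.dvd_gcd hdn hdb, Nat.gcd_ne_zero_right hb.ne'⟩
  · rintro ⟨hd, _⟩
    exact ⟨⟨hd.trans (Nat.gcd_dvd_right _ _), hb.ne'⟩, hd.trans (Nat.gcd_dvd_left _ _)⟩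

lemma key_identity (b N : ℕ) (hb : 0 < b) :
    ∑ n ∈ (Icc 1 N).filter (fun n => Nat.gcd n b = 1), (1 : ℝ) / n
      = ∑ d ∈ b.divisors, (μ d : ℝ) * ((d : ℝ)⁻¹ * (harmonic (N / d) : ℝ)) := by
  classical
  calc ∑ n ∈ (Icc 1 N).filter (fun n => Nat.gcd n b = 1), (1 : ℝ) / n
      = ∑ n ∈ Icc 1 N, (if Nat.gcd n b = 1 then (1 : ℝ) / n else 0) :=
        Finset.sum_filter _ _
    _ = ∑ n ∈ Icc 1 N, ∑ d ∈ b.divisors, (if d ∣ n then (μ d : ℝ) else 0) / n := by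
        refine Finset.sum_congr rfl fun n hn => ?_
        have hn1 : 0 < n := (Finset.mem_Icc.mp hn).1
        rw [← Finset.sum_div, ← Finset.sum_filter, divisors_filter_dvd b n hb hn1]
        have : (∑ d ∈ (Nat.gcd n b).divisors, (μ d : ℝ))
            = ((∑ d ∈ (Nat.gcd n b).divisors, μ d : ℤ) : ℝ) := by push_cast; rfl
        rw [this, moebius_sum_eq]
        by_cases h : Nat.gcd n b = 1 <;> simp [h]
    _ = ∑ d ∈ b.divisors, ∑ n ∈ Icc 1 N, (if d ∣ n then (μ d : ℝ) else 0) / n :=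
        Finset.sum_comm
    _ = ∑ d ∈ b.divisors, (μ d : ℝ) * ((d : ℝ)⁻¹ * (harmonic (N / d) : ℝ)) := by
        refine Finset.sum_congr rfl fun d hd => ?_
        have hd0 : 0 < d := Nat.pos_of_mem_divisors hd
        have h1 : ∑ n ∈ Icc 1 N, (if d ∣ n then (μ d : ℝ) else 0) / n
            = ∑ n ∈ (Icc 1 N).filter (fun n => d ∣ n), (μ d : ℝ) / n := by
          rw [Finset.sum_filter]
          refine Finset.sum_congr rfl fun n _ => ?_
          by_cases h : d ∣ n <;> simp [h]
        rw [h1, ← inner_sum d N hd0, Finset.mul_sum]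
        exact Finset.sum_congr rfl fun n _ => (mul_one_div _ _).symm




lemma Ip_bound (b p : ℕ) (hb : 0 < b) (hp : p ∈ b.primeFactors) :
    |∑ d ∈ b.divisors.filter (fun d => p ∣ d), (μ d : ℝ) / d| ≤ 1 / p := by
  classical
  have hpp : p.Prime := Nat.prime_of_mem_primeFactors hp
  have hpb : p ∣ b := Nat.dvd_of_mem_primeFactors hp
  have hbp0 : 0 < b / p := Nat.div_pos (Nat.le_of_dvd hb hpb) hpp.pos
  have hppos : (0:ℝ) < p := by exact_mod_cast hpp.pos
  -- reindex
  have hre : ∑ d ∈ b.divisors.filter (fun d => p ∣ d), (μ d : ℝ) / d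
      = ∑ e ∈ (b / p).divisors, (μ (p * e) : ℝ) / (p * e) := by
    refine Finset.sum_nbij' (fun d => d / p) (fun e => p * e) ?_ ?_ ?_ ?_ ?_
    · intro d hd
      obtain ⟨hd1, hd2⟩ := Finset.mem_filter.mp hd
      obtain ⟨hdb, _⟩ := Nat.mem_divisors.mp hd1
      rw [Nat.mem_divisors]
      refine ⟨?_, hbp0.ne'⟩
      obtain ⟨e, rfl⟩ := hd2
      simp only [Nat.mul_div_cancel_left e hpp.pos]
      exact (Nat.dvd_div_iff_mul_dvd hpb).mpr hdb
    · intro e he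
      obtain ⟨heb, _⟩ := Nat.mem_divisors.mp he
      refine Finset.mem_filter.mpr ⟨Nat.mem_divisors.mpr ⟨?_, hb.ne'⟩, Dvd.intro e rfl⟩
      exact (Nat.dvd_div_iff_mul_dvd hpb).mp heb
    · intro d hd
      exact Nat.mul_div_cancel' (Finset.mem_filter.mp hd).2
    · intro e _
      exact Nat.mul_div_cancel_left e hpp.pos
    · intro d hd
      obtain ⟨e, rfl⟩ := (Finset.mem_filter.mp hd).2
      simp only [Nat.mul_div_cancel_left e hpp.pos]
      push_cast
      ring
  rw [hre]
  -- pointwise rewrite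
  set k := (b / p).factorization p with hk
  set m := (b / p) / p ^ k with hm
  have hm0 : 0 < m := Nat.ordCompl_pos p hbp0.ne'
  have hpm : ¬ p ∣ m := Nat.not_dvd_ordCompl hpp hbp0.ne'
  have hfilter : (b / p).divisors.filter (fun e => ¬ p ∣ e) = m.divisors := by
    ext e
    simp only [Finset.mem_filter, Nat.mem_divisors]
    constructor
    · rintro ⟨⟨hebp, _⟩, hpe⟩
      refine ⟨?_, hm0.ne'⟩
      have hcop : Nat.Coprime e (p ^ k) :=
        Nat.Coprime.pow_right k (Nat.coprime_comm.mp ((hpp.coprime_iff_not_dvd).mpr hpe))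
      have : e ∣ p ^ k * m := by
        rw [hm, hk, Nat.ordProj_mul_ordCompl_eq_self]
        exact hebp
      exact hcop.dvd_of_dvd_mul_left this
    · rintro ⟨hem, _⟩
      refine ⟨⟨hem.trans (Nat.ordCompl_dvd _ _), hbp0.ne'⟩, fun hpe => hpm (hpe.trans hem)⟩
  have hpoint : ∀ e ∈ (b / p).divisors,
      (μ (p * e) : ℝ) / (p * e) = if ¬ p ∣ e then -(1 / p) * ((μ e : ℝ) / e) else 0 := by
    intro e he
    obtain ⟨heb, _⟩ := Nat.mem_divisors.mp he
    by_cases hpe : p ∣ e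
    · simp only [hpe, not_true_eq_false, if_false]
      have : ¬ Squarefree (p * e) := by
        obtain ⟨f, rfl⟩ := hpe
        intro hsq
        have hu : IsUnit p := hsq p ⟨f, by ring⟩
        exact hpp.one_lt.ne' (Nat.isUnit_iff.mp hu)
      rw [moebius_eq_zero_of_not_squarefree this]
      simp
    · simp only [hpe, not_false_eq_true, if_true]
      have hcop : Nat.Coprime p e := (hpp.coprime_iff_not_dvd).mpr hpe
      have hmul : μ (p * e) = μ p * μ e := isMultiplicative_moebius.map_mul_of_coprime hcop
      rw [hmul, moebius_apply_prime hpp]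
      push_cast
      by_cases he0 : e = 0
      · simp [he0]
      · field_simp
  rw [Finset.sum_congr rfl hpoint]
  rw [← Finset.sum_filter, hfilter, ← Finset.mul_sum, sum_moebius_div m hm0.ne']
  rw [abs_mul, abs_neg, abs_of_nonneg (by positivity : (0:ℝ) ≤ 1 / p)]
  have h1 : |(Nat.totient m : ℝ) / m| ≤ 1 := by
    rw [abs_of_nonneg (by positivity)]
    rw [div_le_one (by exact_mod_cast hm0)]
    exact_mod_cast Nat.totient_le m
  calc 1 / (p:ℝ) * |(Nat.totient m : ℝ) / m| ≤ 1 / p * 1 :=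
        mul_le_mul_of_nonneg_left h1 (by positivity)
    _ = 1 / p := mul_one _

lemma Tprime_bound (b : ℕ) (hb : 0 < b) :
    |∑ d ∈ b.divisors, (μ d : ℝ) / d * Real.log d|
      ≤ ∑ p ∈ b.primeFactors, Real.log p / p := by
  classical
  have hstep : ∀ d ∈ b.divisors, (μ d : ℝ) / d * Real.log d
      = ∑ p ∈ b.primeFactors, (if p ∣ d then (μ d : ℝ) / d * Real.log p else 0) := by
    intro d hd
    obtain ⟨hdb, _⟩ := Nat.mem_divisors.mp hd
    have hd0 : 0 < d := Nat.pos_of_mem_divisors hd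
    by_cases hsq : Squarefree d
    · have hpf : d.primeFactors = b.primeFactors.filter (fun p => p ∣ d) := by
        ext q
        simp only [Nat.mem_primeFactors, Finset.mem_filter]
        constructor
        · rintro ⟨hq1, hq2, _⟩
          exact ⟨⟨hq1, hq2.trans hdb, hb.ne'⟩, hq2⟩
        · rintro ⟨⟨hq1, _, _⟩, hq2⟩
          exact ⟨hq1, hq2, hd0.ne'⟩
      have hlog : Real.log d = ∑ p ∈ d.primeFactors, Real.log p := by
        conv_lhs => rw [← Nat.prod_primeFactors_of_squarefree hsq]
        rw [Nat.cast_prod, Real.log_prod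
          (fun q hq => by exact_mod_cast (Nat.prime_of_mem_primeFactors hq).pos.ne')]
      rw [hlog, hpf, Finset.sum_filter, Finset.mul_sum]
      refine Finset.sum_congr rfl fun p _ => ?_
      by_cases h : p ∣ d <;> simp [h]
    · rw [moebius_eq_zero_of_not_squarefree hsq]
      simp
  rw [Finset.sum_congr rfl hstep, Finset.sum_comm]
  have habs : ∀ p ∈ b.primeFactors,
      |∑ d ∈ b.divisors, (if p ∣ d then (μ d : ℝ) / d * Real.log p else 0)|
        ≤ Real.log p / p := by
    intro p hp
    have hpp : p.Prime := Nat.prime_of_mem_primeFactors hp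
    have hlp : 0 ≤ Real.log p := Real.log_nonneg (by exact_mod_cast hpp.one_lt.le)
    have : ∑ d ∈ b.divisors, (if p ∣ d then (μ d : ℝ) / d * Real.log p else 0)
        = (∑ d ∈ b.divisors.filter (fun d => p ∣ d), (μ d : ℝ) / d) * Real.log p := by
      rw [Finset.sum_mul, Finset.sum_filter]
    rw [this, abs_mul, abs_of_nonneg hlp]
    calc |∑ d ∈ b.divisors.filter (fun d => p ∣ d), (μ d : ℝ) / d| * Real.log p
        ≤ 1 / p * Real.log p :=
          mul_le_mul_of_nonneg_right (Ip_bound b p hb hp) hlp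
      _ = Real.log p / p := by ring
  calc |∑ p ∈ b.primeFactors, ∑ d ∈ b.divisors,
        (if p ∣ d then (μ d : ℝ) / d * Real.log p else 0)|
      ≤ ∑ p ∈ b.primeFactors, |∑ d ∈ b.divisors,
        (if p ∣ d then (μ d : ℝ) / d * Real.log p else 0)| := Finset.abs_sum_le_sum_abs _ _
    _ ≤ ∑ p ∈ b.primeFactors, Real.log p / p := Finset.sum_le_sum habs



noncomputable abbrev gam : ℝ := Real.eulerMascheroniConstant

lemma gam_nonneg : 0 ≤ gam := by
  have := Real.one_half_lt_eulerMascheroniConstant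
  unfold gam; linarith

lemma gam_le_one : gam ≤ 1 := by
  have := Real.eulerMascheroniConstant_lt_two_thirds
  unfold gam; linarith

lemma harmonic_est (x : ℝ) (d : ℕ) (hd : 0 < d) (hdx : (d : ℝ) ≤ x) :
    |(harmonic (⌊x⌋₊ / d) : ℝ) - (Real.log x - Real.log d + gam)| ≤ 2 * d / x := by
  have hdr : (0:ℝ) < d := by exact_mod_cast hd
  have hx : (0:ℝ) < x := lt_of_lt_of_le hdr hdx
  have hfd : ⌊x⌋₊ / d = ⌊x / d⌋₊ := (Nat.floor_div_natCast x d).symm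
  set m := ⌊x⌋₊ / d with hmdef
  have hm : m = ⌊x / d⌋₊ := hfd
  have hxd1 : (1:ℝ) ≤ x / d := by rw [le_div_iff₀ hdr]; linarith
  have hm1 : 1 ≤ m := by
    rw [hm]
    exact Nat.le_floor (by exact_mod_cast hxd1)
  have hmr : (1:ℝ) ≤ m := by exact_mod_cast hm1
  have hmx : (m:ℝ) ≤ x / d := by rw [hm]; exact Nat.floor_le (by positivity)
  have hxm : x / d < m + 1 := by rw [hm]; exact Nat.lt_floor_add_one _
  -- harmonic bounds
  have h_up : (harmonic m : ℝ) ≤ Real.log (m + 1) + gam := by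
    have := Real.eulerMascheroniSeq_lt_eulerMascheroniConstant m
    unfold Real.eulerMascheroniSeq at this
    unfold gam; linarith
  have h_lo : Real.log m + gam ≤ (harmonic m : ℝ) := by
    have := Real.eulerMascheroniConstant_lt_eulerMascheroniSeq' m
    unfold Real.eulerMascheroniSeq' at this
    rw [if_neg (by omega : m ≠ 0)] at this
    unfold gam; linarith
  -- log comparisons
  have hlog1 : Real.log m ≤ Real.log (x / d) := Real.log_le_log (by positivity) hmx
  have hlog2 : Real.log (x / d) ≤ Real.log (m + 1) :=
    Real.log_le_log (by positivity) hxm.le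
  have hgap : Real.log (m + 1) - Real.log m ≤ 1 / m := by
    rw [← Real.log_div (by positivity) (by positivity)]
    have := Real.log_le_sub_one_of_pos (show (0:ℝ) < ((m:ℝ) + 1) / m by positivity)
    have heq : ((m:ℝ) + 1) / m - 1 = 1 / m := by field_simp; ring
    linarith
  have hinv : (1:ℝ) / m ≤ 2 * d / x := by
    rw [div_le_div_iff₀ (by positivity) hx]
    have : x / d < 2 * m := by linarith
    rw [div_lt_iff₀ hdr] at this
    nlinarith
  have hlogdiv : Real.log (x / d) = Real.log x - Real.log d :=
    Real.log_div hx.ne' hdr.ne'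
  rw [abs_le]
  constructor
  · have : Real.log (x / d) - Real.log m ≤ 1 / m := by linarith
    nlinarith [h_lo]
  · nlinarith [h_up]

lemma divisors_card_le (b : ℕ) : b.divisors.card ≤ b := by
  classical
  calc b.divisors.card ≤ (Finset.Ico 1 (b + 1)).card := by
        apply Finset.card_le_card
        intro d hd
        have h1 := Nat.pos_of_mem_divisors hd
        have h2 := Nat.le_of_dvd (Nat.pos_of_mem_divisors (Nat.mem_divisors_self b (by
          intro hb0
          rw [hb0] at hd
          simp at hd))) (Nat.mem_divisors.mp hd).1
        exact Finset.mem_Ico.mpr ⟨h1, by omega⟩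
    _ = b := by simp

/-- Lemma 7 of Gonek–Hughes–Keating:
`∑_{n ≤ x, (an,b)=1} 1/n = (φ(b)/b) log x + O(log log 3b)` for `(a,b) = 1`, `b ≤ x`. -/
theorem sum_reciprocal_coprime :
    ∃ C : ℝ, ∀ a b : ℕ, 0 < a → 0 < b → Nat.gcd a b = 1 → ∀ x : ℝ, (b : ℝ) ≤ x →
      |(∑ n ∈ (Finset.Icc 1 ⌊x⌋₊).filter (fun n => Nat.gcd (a * n) b = 1), (1 : ℝ) / n)
          - ((Nat.totient b : ℝ) / b) * Real.log x|
        ≤ C * Real.log (Real.log (3 * b)) := by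
  classical
  set c0 := Real.log (Real.log 3) with hc0def
  have hlog3 : 1 < Real.log 3 := by
    rw [Real.lt_log_iff_exp_lt (by norm_num)]
    calc Real.exp 1 < 2.7182818286 := Real.exp_one_lt_d9
      _ < 3 := by norm_num
  have hc0 : 0 < c0 := Real.log_pos hlog3
  refine ⟨11 + 20 / c0, ?_⟩
  intro a b ha hb hab x hbx
  have hb1 : (1:ℝ) ≤ b := by exact_mod_cast hb
  have hx : (0:ℝ) < x := by linarith
  set N := ⌊x⌋₊ with hN
  have hfilter : (Finset.Icc 1 N).filter (fun n => Nat.gcd (a * n) b = 1)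
      = (Finset.Icc 1 N).filter (fun n => Nat.gcd n b = 1) := by
    apply Finset.filter_congr
    intro n _
    have h : Nat.Coprime (a * n) b ↔ Nat.Coprime a b ∧ Nat.Coprime n b :=
      Nat.coprime_mul_iff_left
    simp only [Nat.Coprime] at h
    rw [show (Nat.gcd (a * n) b = 1) ↔ (Nat.gcd a b = 1 ∧ Nat.gcd n b = 1) from h, hab]
    simp
  rw [hfilter]
  have hmoeb_tot : ∑ d ∈ b.divisors, (μ d : ℝ) / d = (Nat.totient b : ℝ) / b :=
    sum_moebius_div b hb.ne'
  set T' : ℝ := ∑ d ∈ b.divisors, (μ d : ℝ) / d * Real.log d with hT'def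
  set E : ℝ := ∑ d ∈ b.divisors,
    (μ d : ℝ) / d * ((harmonic (N / d) : ℝ) - (Real.log x - Real.log d + gam)) with hEdef
  have main_eq : (∑ n ∈ (Finset.Icc 1 N).filter (fun n => Nat.gcd n b = 1), (1 : ℝ) / n)
      - ((Nat.totient b : ℝ) / b) * Real.log x
      = ∑ d ∈ b.divisors, ((μ d : ℝ) / d * gam - (μ d : ℝ) / d * Real.log d
          + (μ d : ℝ) / d * ((harmonic (N / d) : ℝ) - (Real.log x - Real.log d + gam))) := by
    rw [key_identity b N hb, ← hmoeb_tot, Finset.sum_mul, ← Finset.sum_sub_distrib]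
    exact Finset.sum_congr rfl fun d _ => by ring
  have split_eq : (∑ d ∈ b.divisors, ((μ d : ℝ) / d * gam - (μ d : ℝ) / d * Real.log d
          + (μ d : ℝ) / d * ((harmonic (N / d) : ℝ) - (Real.log x - Real.log d + gam))))
      = gam * ((Nat.totient b : ℝ) / b) - T' + E := by
    rw [Finset.sum_add_distrib, Finset.sum_sub_distrib, hT'def, hEdef]
    congr 1
    congr 1
    rw [← Finset.sum_mul, hmoeb_tot]
    ring
  rw [main_eq, split_eq]
  -- bound E
  have hE : |E| ≤ 2 := by
    have hterm : ∀ d ∈ b.divisors,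
        |(μ d : ℝ) / d * ((harmonic (N / d) : ℝ) - (Real.log x - Real.log d + gam))|
          ≤ 2 / x := by
      intro d hd
      have hd0 : 0 < d := Nat.pos_of_mem_divisors hd
      have hdr : (0:ℝ) < d := by exact_mod_cast hd0
      have hdb : d ≤ b := Nat.le_of_dvd hb (Nat.mem_divisors.mp hd).1
      have hdx : (d : ℝ) ≤ x := le_trans (by exact_mod_cast hdb) hbx
      have h1 : |(μ d : ℝ) / d| ≤ 1 / d := by
        rw [abs_div, abs_of_nonneg (by positivity : (0:ℝ) ≤ (d:ℝ))]
        gcongr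
        exact abs_moebius_le_one d
      have h2 := harmonic_est x d hd0 hdx
      rw [abs_mul]
      calc |(μ d : ℝ) / d| * |(harmonic (⌊x⌋₊ / d) : ℝ) - (Real.log x - Real.log d + gam)|
          ≤ (1 / d) * (2 * d / x) :=
            mul_le_mul h1 h2 (abs_nonneg _) (by positivity)
        _ = 2 / x := by field_simp
    calc |E| ≤ ∑ d ∈ b.divisors,
          |(μ d : ℝ) / d * ((harmonic (N / d) : ℝ) - (Real.log x - Real.log d + gam))| :=
          Finset.abs_sum_le_sum_abs _ _
      _ ≤ ∑ _d ∈ b.divisors, 2 / x := Finset.sum_le_sum hterm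
      _ = (b.divisors.card : ℝ) * (2 / x) := by rw [Finset.sum_const, nsmul_eq_mul]
      _ ≤ (b : ℝ) * (2 / x) := by
          apply mul_le_mul_of_nonneg_right _ (by positivity)
          exact_mod_cast divisors_card_le b
      _ ≤ 2 := by
          have heq : (b : ℝ) * (2 / x) = 2 * b / x := by ring
          rw [heq, div_le_iff₀ hx]
          linarith
  have hT : |T'| ≤ 11 * Real.log (Real.log (3 * b)) + 17 :=
    le_trans (Tprime_bound b hb) (primefactors_mertens b hb)
  have hg : |gam * ((Nat.totient b : ℝ) / b)| ≤ 1 := by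
    rw [abs_of_nonneg (mul_nonneg gam_nonneg (totient_div_nonneg b))]
    calc gam * ((Nat.totient b : ℝ) / b) ≤ 1 * 1 :=
          mul_le_mul gam_le_one (totient_div_le_one b) (totient_div_nonneg b) zero_le_one
      _ = 1 := mul_one 1
  have htri : |gam * ((Nat.totient b : ℝ) / b) - T' + E|
      ≤ 1 + (11 * Real.log (Real.log (3 * b)) + 17) + 2 := by
    have h1 : |gam * ((Nat.totient b : ℝ) / b) - T' + E|
        ≤ |gam * ((Nat.totient b : ℝ) / b) - T'| + |E| := abs_add_le _ _
    have h2 : |gam * ((Nat.totient b : ℝ) / b) - T'|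
        ≤ |gam * ((Nat.totient b : ℝ) / b)| + |T'| := abs_sub _ _
    linarith
  have hll : c0 ≤ Real.log (Real.log (3 * b)) := by
    have h1 : Real.log 3 ≤ Real.log (3 * b) := by
      apply Real.log_le_log (by norm_num)
      nlinarith
    exact Real.log_le_log (by linarith) h1
  have hdiv : 20 / c0 * c0 = 20 := div_mul_cancel₀ 20 hc0.ne'
  have hmul := mul_le_mul_of_nonneg_left hll (by positivity : (0:ℝ) ≤ 20 / c0)
  have hexp : (11 + 20 / c0) * Real.log (Real.log (3 * b))
      = 11 * Real.log (Real.log (3 * b)) + (20 / c0) * Real.log (Real.log (3 * b)) := by ring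
  calc |gam * ((Nat.totient b : ℝ) / b) - T' + E|
      ≤ 1 + (11 * Real.log (Real.log (3 * b)) + 17) + 2 := htri
    _ = 11 * Real.log (Real.log (3 * b)) + 20 := by ring
    _ ≤ (11 + 20 / c0) * Real.log (Real.log (3 * b)) := by
        rw [hexp]; linarith

end GHK
end
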